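/- arXiv:0707.3244 — 8 statements merged into one kernel-verified Lean document; each statement's English description precedes it below -/
import Mathlib

section
/- For every positive integer r, ζ({2}^r) = π^(2r) / (2r+1)!. -/
/-!
Expanding Euler's product `sin (π x) / (π x) = ∏_{n ≥ 1} (1 - x² / n²)` over finite sets of
factors shows that `∑_r (-x²)^r ζ({2}^r)` is this function, since `ζ({2}^r)` is the `r`-th
elementary symmetric function of the numbers `1 / n²`. Comparing with the Taylor series of
`sin (π x) / (π x)` and using uniqueness of power series coefficients (in `y = -x²`) gives
`ζ({2}^r) = π^(2r) / (2r+1)!`.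
-/

/-- The multiple zeta value `ζ(s₁,…,s_d) = ∑_{k₁ > k₂ > ⋯ > k_d ≥ 1} 1/(k₁^{s₁} ⋯ k_d^{s_d})`. -/
noncomputable def mzv (s : List ℕ) : ℝ :=
  ∑' k : {k : Fin s.length → ℕ // StrictAnti k ∧ ∀ i, 0 < k i},
    ∏ i, 1 / ((k.1 i : ℝ) ^ s.get i)

open Filter Topology Real FormalMultilinearSeries

def strictAntiPosEquiv (n : ℕ) :
    {k : Fin n → ℕ // StrictAnti k ∧ ∀ i, 0 < k i} ≃ (Fin n ↪o ℕ+) where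
  toFun k := OrderEmbedding.ofStrictMono (fun j ↦ ⟨k.1 j.rev, k.2.2 _⟩)
    fun _ _ hij ↦ k.2.1 (Fin.rev_lt_rev.mpr hij)
  invFun e := ⟨fun i ↦ e i.rev, fun _ _ hij ↦ e.strictMono (Fin.rev_lt_rev.mpr hij),
    fun i ↦ (e i.rev).pos⟩
  left_inv k := by ext i; exact congrArg k.1 i.rev_rev
  right_inv e := by ext j; exact congrArg e j.rev_rev

theorem mzv_eq_tsum_orderEmbedding (s : List ℕ) :
    mzv s = ∑' e : Fin s.length ↪o ℕ+, ∏ j, 1 / (e j : ℝ) ^ s.get j.rev := by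
  rw [mzv, ← (strictAntiPosEquiv s.length).symm.tsum_eq]
  refine tsum_congr fun e ↦ Fintype.prod_equiv Fin.revPerm _ _ fun j ↦ ?_
  simp [strictAntiPosEquiv]

noncomputable def tsumEsymm {ι : Type*} (f : ι → ℝ) (r : ℕ) : ℝ :=
  ∑' S : Set.powersetCard ι r, ∏ i ∈ S.1, f i

theorem tsumEsymm_eq_tsum_orderEmbedding {ι : Type*} [LinearOrder ι] (f : ι → ℝ) (r : ℕ) :
    tsumEsymm f r = ∑' e : Fin r ↪o ι, ∏ j, f (e j) := by
  rw [tsumEsymm, ← Set.powersetCard.ofFinEmbEquiv.tsum_eq]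
  congr! 2 with e
  rw [Set.powersetCard.ofFinEmbEquiv_apply, Set.powersetCard.val_ofFinEmb, Finset.prod_map]
  rfl

section tsumEsymm

variable {ι : Type*} {f : ι → ℝ}

theorem summable_finsetProd_mul (hf0 : 0 ≤ f) (hf : Summable f) (t : ℝ) :
    Summable fun S : Finset ι ↦ ∏ i ∈ S, t * f i := by
  refine .of_norm_bounded
    (summable_finsetProd_of_summable_nonneg (fun i ↦ mul_nonneg (abs_nonneg t) (hf0 i))
      (hf.mul_left |t|)) fun S ↦ ?_
  simp [norm_prod, abs_of_nonneg (hf0 _)]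

theorem hasSum_tsumEsymm_mul_pow (hf0 : 0 ≤ f) (hf : Summable f) (t : ℝ) :
    HasSum (fun r ↦ tsumEsymm f r * t ^ r) (∑' S : Finset ι, ∏ i ∈ S, t * f i) := by
  refine ((summable_finsetProd_mul hf0 hf t).hasSum.tsum_fiberwise Finset.card).congr_fun
    fun r ↦ ?_
  rw [tsumEsymm, ← tsum_mul_right]
  refine tsum_congr fun S ↦ ?_
  rw [Finset.prod_mul_distrib, Finset.prod_const, S.2, mul_comm]

end tsumEsymm

section PowerSeries

variable {𝕜 : Type*} [NontriviallyNormedField 𝕜] [CompleteSpace 𝕜]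

theorem hasFPowerSeriesAt_tsum_mul_pow {a : ℕ → 𝕜} (ha : Summable fun n ↦ ‖a n‖) :
    HasFPowerSeriesAt (fun z ↦ ∑' n, a n * z ^ n) (ofScalars 𝕜 a) 0 := by
  have hr : 0 < (ofScalars 𝕜 a).radius :=
    zero_lt_one.trans_le <| (ofScalars 𝕜 a).le_radius_of_summable (r := 1) <| by
      simpa [ofScalars_norm] using ha
  convert ((ofScalars 𝕜 a).hasFPowerSeriesOnBall hr).hasFPowerSeriesAt
  exact (ofScalars_sum_eq (E := 𝕜) a _).symm

theorem eq_of_frequently_tsum_mul_pow_eq {a b : ℕ → 𝕜} (ha : Summable fun n ↦ ‖a n‖)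
    (hb : Summable fun n ↦ ‖b n‖)
    (h : ∃ᶠ z in 𝓝[≠] 0, ∑' n, a n * z ^ n = ∑' n, b n * z ^ n) : a = b := by
  have hfa := hasFPowerSeriesAt_tsum_mul_pow ha
  have hfb := hasFPowerSeriesAt_tsum_mul_pow hb
  have hev := (hfa.analyticAt.frequently_eq_iff_eventually_eq hfb.analyticAt).mp h
  exact (ofScalars_series_eq_iff 𝕜 a b).mp (hfa.eq_formalMultilinearSeries_of_eventually hfb hev)

end PowerSeries

theorem Real.hasProd_euler_sin {x : ℝ} (hx : x ≠ 0) :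
    HasProd (fun n : ℕ+ ↦ 1 - x ^ 2 / (n : ℝ) ^ 2) (sin (π * x) / (π * x)) := by
  rw [← Equiv.pnatEquivNat.symm.hasProd_iff]
  have hsum : Summable fun j : ℕ ↦ -(x ^ 2 / ((j : ℝ) + 1) ^ 2) := by
    have := (summable_nat_add_iff 1).mpr (Real.summable_one_div_nat_pow.mpr one_lt_two)
    simpa [div_eq_mul_inv] using (this.mul_left (x ^ 2)).neg
  have hmul := Real.multipliable_one_add_of_summable hsum
  simp only [← sub_eq_add_neg] at hmul
  convert (hmul.hasProd_iff_tendsto_nat).mpr ?_ using 2 with j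
  · simp
  have hπx : π * x ≠ 0 := mul_ne_zero pi_ne_zero hx
  refine ((tendsto_euler_sin_prod x).div_const (π * x)).congr fun n ↦ ?_
  simp [mul_div_cancel_left₀ _ hπx]

theorem hasSum_sin_pi_mul_div {x : ℝ} (hx : x ≠ 0) :
    HasSum (fun r : ℕ ↦ π ^ (2 * r) / (2 * r + 1).factorial * (-x ^ 2) ^ r)
      (sin (π * x) / (π * x)) := by
  refine ((Real.hasSum_sin (π * x)).div_const (π * x)).congr_fun fun r ↦ ?_
  have hπx : π * x ≠ 0 := mul_ne_zero pi_ne_zero hx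
  field_simp
  ring

theorem summable_pi_pow_div_factorial :
    Summable fun r : ℕ ↦ π ^ (2 * r) / (2 * r + 1).factorial := by
  refine ((Real.hasSum_sinh π).summable.div_const π).congr fun r ↦ ?_
  field_simp
  ring

theorem summable_one_div_pnat_sq : Summable fun n : ℕ+ ↦ 1 / (n : ℝ) ^ 2 :=
  (Real.summable_one_div_nat_pow.mpr one_lt_two).comp_injective PNat.coe_injective

theorem hasSum_tsumEsymm_one_div_sq_mul_pow (t : ℝ) :
    HasSum (fun r ↦ tsumEsymm (fun n : ℕ+ ↦ 1 / (n : ℝ) ^ 2) r * t ^ r)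
      (∑' S : Finset ℕ+, ∏ n ∈ S, t * (1 / (n : ℝ) ^ 2)) :=
  hasSum_tsumEsymm_mul_pow (fun n ↦ by positivity) summable_one_div_pnat_sq t

theorem hasSum_tsumEsymm_one_div_sq_mul_neg_sq {x : ℝ} (hx : x ≠ 0) :
    HasSum (fun r ↦ tsumEsymm (fun n : ℕ+ ↦ 1 / (n : ℝ) ^ 2) r * (-x ^ 2) ^ r)
      (sin (π * x) / (π * x)) := by
  convert hasSum_tsumEsymm_one_div_sq_mul_pow (-x ^ 2) using 1
  have hsum := (summable_finsetProd_mul (fun n : ℕ+ ↦ by positivity) summable_one_div_pnat_sq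
    (-x ^ 2)).hasSum
  exact (Real.hasProd_euler_sin hx).unique
    ((hasProd_one_add_of_hasSum_prod hsum).congr_fun fun n ↦ by ring)

theorem tsumEsymm_one_div_sq (r : ℕ) :
    tsumEsymm (fun n : ℕ+ ↦ 1 / (n : ℝ) ^ 2) r = π ^ (2 * r) / (2 * r + 1).factorial := by
  have hneg : ∀ z ∈ Set.Iio (0 : ℝ),
      ∑' r, tsumEsymm (fun n : ℕ+ ↦ 1 / (n : ℝ) ^ 2) r * z ^ r =
        ∑' r : ℕ, π ^ (2 * r) / (2 * r + 1).factorial * z ^ r := by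
    intro z (hz : z < 0)
    obtain ⟨x, hx, rfl⟩ : ∃ x : ℝ, x ≠ 0 ∧ -x ^ 2 = z :=
      ⟨√(-z), (sqrt_pos.mpr (neg_pos.mpr hz)).ne', by rw [sq_sqrt (by linarith), neg_neg]⟩
    rw [(hasSum_tsumEsymm_one_div_sq_mul_neg_sq hx).tsum_eq, (hasSum_sin_pi_mul_div hx).tsum_eq]
  have hcoeff : tsumEsymm (fun n : ℕ+ ↦ 1 / (n : ℝ) ^ 2) =
      fun r ↦ π ^ (2 * r) / (2 * r + 1).factorial := eq_of_frequently_tsum_mul_pow_eq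
    (summable_norm_iff.mpr (by simpa using (hasSum_tsumEsymm_one_div_sq_mul_pow 1).summable))
    (summable_norm_iff.mpr summable_pi_pow_div_factorial)
    ((eventually_nhdsWithin_of_forall hneg).frequently.filter_mono
      (nhdsWithin_mono _ fun _ hz ↦ ne_of_lt hz))
  exact congrFun hcoeff r

theorem zeta_two_pow_general (r : ℕ) :
    mzv (List.replicate r 2) = Real.pi ^ (2 * r) / Nat.factorial (2 * r + 1) := by
  rw [mzv_eq_tsum_orderEmbedding]
  simp only [List.get_eq_getElem, List.getElem_replicate]
  rw [← tsumEsymm_eq_tsum_orderEmbedding (fun n : ℕ+ ↦ 1 / (n : ℝ) ^ 2),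
    List.length_replicate, tsumEsymm_one_div_sq]

/-- For every positive integer `r`, `ζ({2}^r) = π^(2r) / (2r+1)!`. -/
theorem zeta_two_pow (r : ℕ) (hr : 0 < r) :
    mzv (List.replicate r 2) = Real.pi ^ (2 * r) / Nat.factorial (2 * r + 1) :=
  zeta_two_pow_general r
end

section
/- For all non-negative integers p and q, in the free ℤ-module on words over the alphabet {A,B} one has (AB)^p ⧢ (AB)^q = Σ_{j=0}^{min(p,q)} binom(p+q−2j, p−j) · 4^j · T_{p+q,j}. Equivalently: every word occurring with nonzero multiplicity in (AB)^p ⧢ (AB)^q contains the subword AA exactly j times for some 0 ≤ j ≤ min(p,q), and each word containing AA exactly j times occurs with multiplicity exactly binom(p+q−2j, p−j) · 4^j. -/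
/-- Words over the two-letter alphabet `{A, B}`, encoded as lists of booleans
with `A = true` and `B = false`. -/
abbrev Word := List Bool

/-- The list of all shuffles (interleavings) of two lists, with multiplicity. -/
def listShuffles {α : Type*} : List α → List α → List (List α)
  | [], v => [v]
  | u, [] => [u]
  | a :: u, b :: v =>
      ((listShuffles u (b :: v)).map (a :: ·)) ++ ((listShuffles (a :: u) v).map (b :: ·))

/-- The shuffle product `u ⧢ v` of two words, as an element of the free
ℤ-module on words (each interleaving counted with multiplicity). -/
noncomputable def wordShuffle (u v : Word) : Word →₀ ℤ :=
  ((listShuffles u v).map fun w => Finsupp.single w (1 : ℤ)).sum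

/-- The word `(AB)^p = ABAB⋯AB` with `p` copies of `AB`. -/
def ABpow (p : ℕ) : Word := List.flatten (List.replicate p [true, false])

/-- The number of occurrences of the subword `AA` in a word, i.e. the number of
indices `i` such that positions `i` and `i+1` both hold the letter `A`. -/
def countAA (w : Word) : ℕ := (w.zip w.tail).count (true, true)

/-- `T_{p+q,j}`: the formal sum, each with coefficient 1, of the distinct words
containing `AA` exactly `j` times that occur with nonzero multiplicity in
`(AB)^p ⧢ (AB)^q`. -/
noncomputable def T (p q j : ℕ) : Word →₀ ℤ :=
  ∑ w ∈ (wordShuffle (ABpow p) (ABpow q)).support.filter (fun w => countAA w = j),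
    Finsupp.single w (1 : ℤ)

-- basic equation lemmas
@[simp] lemma listShuffles_nil_left {α : Type*} (v : List α) : listShuffles [] v = [v] := by
  cases v <;> simp [listShuffles]

@[simp] lemma listShuffles_cons_nil {α : Type*} (a : α) (u : List α) :
    listShuffles (a :: u) [] = [a :: u] := by simp [listShuffles]

@[simp] lemma listShuffles_cons_cons {α : Type*} (a b : α) (u v : List α) :
    listShuffles (a :: u) (b :: v) =
      ((listShuffles u (b :: v)).map (a :: ·)) ++ ((listShuffles (a :: u) v).map (b :: ·)) := by simp [listShuffles]

def Bw (p : ℕ) : Word := false :: ABpow p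

@[simp] lemma ABpow_zero : ABpow 0 = [] := rfl

lemma ABpow_succ (p : ℕ) : ABpow (p+1) = true :: Bw p := by
  simp [ABpow, Bw, List.replicate_succ]

@[simp] lemma ABpow_length (p : ℕ) : (ABpow p).length = 2 * p := by
  induction p with
  | zero => rfl
  | succ p ih => rw [ABpow_succ]; simp [Bw] at *; omega

@[simp] lemma Bw_length (p : ℕ) : (Bw p).length = 2 * p + 1 := by simp [Bw]

@[simp] lemma countAA_nil : countAA [] = 0 := rfl

@[simp] lemma countAA_singleton (a : Bool) : countAA [a] = 0 := rfl

lemma countAA_cons_cons (a b : Bool) (w : Word) :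
    countAA (a :: b :: w) = countAA (b :: w) + (if a = true ∧ b = true then 1 else 0) := by
  rcases a <;> rcases b <;> simp [countAA, List.count_cons]

@[simp] lemma countAA_cons_true_true (w : Word) :
    countAA (true :: true :: w) = countAA (true :: w) + 1 := by
  rw [countAA_cons_cons]; simp

@[simp] lemma countAA_cons_mixed (a : Bool) (w : Word) :
    countAA (a :: false :: w) = countAA (false :: w) := by
  rw [countAA_cons_cons]; simp

@[simp] lemma countAA_cons_false (b : Bool) (w : Word) :
    countAA (false :: b :: w) = countAA (b :: w) := by
  rw [countAA_cons_cons]; simp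

@[simp] lemma countAA_false_cons (w : Word) : countAA (false :: w) = countAA w := by
  rcases w with _ | ⟨b, w'⟩ <;> simp

@[simp] lemma countAA_ABpow (p : ℕ) : countAA (ABpow p) = 0 := by
  induction p with
  | zero => rfl
  | succ p ih =>
    rw [ABpow_succ, Bw]
    rw [countAA_cons_cons]
    rcases p with _ | p
    · simp
    · rw [ABpow_succ, Bw] at *
      simp_all

@[simp] lemma countAA_Bw (p : ℕ) : countAA (Bw p) = 0 := by simp [Bw]

def V : ℕ → Word → Bool
  | 0, [] => true
  | _+1, [] => false
  | h, true :: w => decide (h < 2) && V (h+1) w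
  | 0, false :: _ => false
  | h+1, false :: w => V h w

@[simp] lemma V_nil_zero : V 0 [] = true := rfl
@[simp] lemma V_nil_succ (h : ℕ) : V (h+1) [] = false := rfl
@[simp] lemma V_true (h : ℕ) (w : Word) : V h (true :: w) = (decide (h < 2) && V (h+1) w) := by
  rcases h with _ | h <;> rfl
@[simp] lemma V_false_zero (w : Word) : V 0 (false :: w) = false := rfl
@[simp] lemma V_false_succ (h : ℕ) (w : Word) : V (h+1) (false :: w) = V h w := rfl

@[simp] lemma V_ABpow (p : ℕ) : V 0 (ABpow p) = true := by
  induction p with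
  | zero => rfl
  | succ p ih => rw [ABpow_succ, Bw]; simp [ih]

@[simp] lemma V_Bw (p : ℕ) : V 1 (Bw p) = true := by simp [Bw]

def bonus : ℕ → Word → ℕ
  | 0, _ => 0
  | 1, true :: _ => 3
  | 1, _ => 1
  | _+2, _ => 2

@[simp] lemma bonus_zero (w : Word) : bonus 0 w = 0 := rfl
@[simp] lemma bonus_one_true (w : Word) : bonus 1 (true :: w) = 3 := rfl
@[simp] lemma bonus_one_false (w : Word) : bonus 1 (false :: w) = 1 := rfl
@[simp] lemma bonus_one_nil : bonus 1 [] = 1 := rfl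
@[simp] lemma bonus_two (h : ℕ) (w : Word) : bonus (h+2) w = 2 := rfl

lemma V_ineq : ∀ (w : Word) (h : ℕ), V h w = true →
    4 * countAA w + bonus h w ≤ w.length := by
  intro w
  induction w with
  | nil =>
    intro h hV
    rcases h with _ | h
    · simp
    · simp at hV
  | cons a w' ih =>
    intro h hV
    rcases a with _ | _
    · -- a = false
      rcases h with _ | h
      · simp at hV
      · simp only [V_false_succ] at hV
        have H := ih h hV
        have hc : countAA (false :: w') = countAA w' := by
          rcases w' with _ | ⟨b, w''⟩ <;> simp
        have hb : bonus (h+1) (false :: w') ≤ bonus h w' + 1 := by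
          rcases h with _ | _ | h
          · simp
          · rcases w' with _ | ⟨b, w''⟩
            · simp
            · rcases b <;> simp
          · simp
        simp only [List.length_cons]
        omega
    · -- a = true
      simp only [V_true, Bool.and_eq_true, decide_eq_true_eq] at hV
      obtain ⟨hh, hV⟩ := hV
      have H := ih (h+1) hV
      interval_cases h
      · -- h = 0
        rcases w' with _ | ⟨b, w''⟩
        · simp at hV
        · rcases b with _ | _
          · rw [countAA_cons_mixed]
            simp only [bonus_zero, List.length_cons, bonus_one_false] at *
            simp at H ⊢
            omega
          · rw [countAA_cons_true_true]
            simp only [bonus_zero, List.length_cons, bonus_one_true] at *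
            simp at H ⊢
            omega
      · -- h = 1
        rcases w' with _ | ⟨b, w''⟩
        · simp at hV
        · rcases b with _ | _
          · rw [countAA_cons_mixed]
            simp only [bonus_one_true, List.length_cons, bonus_two] at *
            simp at H ⊢
            omega
          · -- V 2 (true :: w'') is false
            simp only [V_true] at hV
            simp at hV

lemma V_zero_AA_zero_eq : ∀ (q : ℕ) (w : Word), V 0 w = true → countAA w = 0 →
    w.length = 2 * q → w = ABpow q := by
  intro q
  induction q with
  | zero => intro w _ _ hl; simpa using List.length_eq_zero_iff.mp (by omega)
  | succ q ih =>
    intro w hV hAA hl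
    rcases w with _ | ⟨a, w'⟩
    · simp at hl
    · rcases a with _ | _
      · simp at hV
      · rcases w' with _ | ⟨b, w''⟩
        · simp at hl; omega
        · rcases b with _ | _
          · -- w = true :: false :: w''
            rw [countAA_cons_mixed] at hAA
            simp only [V_true, V_false_succ] at hV
            simp at hV
            have := ih w'' hV (by
              rcases w'' with _ | ⟨c, w3⟩
              · simp
              · simpa using hAA) (by simp at hl; omega)
            rw [ABpow_succ, Bw, this]
          · rw [countAA_cons_true_true] at hAA; omega

lemma V_one_AA_zero_eq (q : ℕ) (w : Word) (hV : V 1 w = true) (hAA : countAA w = 0)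
    (hh : w.head? = some false) (hl : w.length = 2 * q + 1) : w = Bw q := by
  rcases w with _ | ⟨a, w'⟩
  · simp at hh
  · rcases a with _ | _
    · simp only [V_false_succ] at hV
      have hAA' : countAA w' = 0 := by
        rcases w' with _ | ⟨b, w''⟩
        · simp
        · simpa using hAA
      rw [Bw, V_zero_AA_zero_eq q w' hV hAA' (by simp at hl; omega)]
    · simp at hh

def F00 (p q : ℕ) (w : Word) : ℕ :=
  if V 0 w = true ∧ w.length = 2*(p+q) ∧ countAA w ≤ p ∧ countAA w ≤ q then
    Nat.choose (p + q - 2 * countAA w) (p - countAA w) * 4 ^ countAA w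
  else 0

def F01 (p q : ℕ) : Word → ℕ
  | [] => 0
  | (true :: w') =>
    if V 1 (true :: w') = true ∧ (true :: w').length = 2*(p+q)+1 ∧
        countAA (true :: w') ≤ q ∧ countAA (true :: w') + 1 ≤ p then
      Nat.choose (p + q - (2 * countAA (true :: w') + 1)) (q - countAA (true :: w')) * 2
        * 4 ^ countAA (true :: w')
    else 0
  | (false :: w') =>
    if V 1 (false :: w') = true ∧ (false :: w').length = 2*(p+q)+1 ∧
        countAA (false :: w') ≤ p ∧ countAA (false :: w') ≤ q then
      Nat.choose (p + q - 2 * countAA (false :: w')) (q - countAA (false :: w')) * 4 ^ countAA (false :: w')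
    else 0

@[simp] lemma F01_nil (p q : ℕ) : F01 p q [] = 0 := rfl

def F10 (p q : ℕ) (w : Word) : ℕ := F01 q p w

def F11 (p q : ℕ) (w : Word) : ℕ :=
  if V 2 w = true ∧ w.length = 2*(p+q)+2 ∧ countAA w ≤ p ∧ countAA w ≤ q then
    Nat.choose (p + q - 2 * countAA w) (p - countAA w) * 2 * 4 ^ countAA w
  else 0

-- counting helpers
lemma count_map_cons (a b : Bool) (L : List Word) (w : Word) :
    ((L.map (a :: ·)).count (b :: w)) = if a = b then L.count w else 0 := by
  induction L with
  | nil => simp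
  | cons x L ih =>
    rcases eq_or_ne a b with rfl | hab
    · simp only [List.map_cons, List.count_cons, ih, beq_iff_eq, List.cons_eq_cons, if_pos rfl]
      by_cases h : w = x
      · simp [h]
      · simp [h]
    · simp only [List.map_cons, List.count_cons, ih, beq_iff_eq, List.cons_eq_cons, if_neg hab]
      have hna : ¬ (b = a ∧ w = x) := fun hc => hab hc.1.symm
      simp [hna]
      exact fun h => absurd h hab

lemma count_map_cons_nil (a : Bool) (L : List Word) :
    ((L.map (a :: ·)).count []) = 0 := by
  refine List.count_eq_zero.mpr ?_
  intro hmem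
  obtain ⟨x, _, hx⟩ := List.mem_map.mp hmem
  simp at hx

lemma count_singleton (v w : Word) : List.count w [v] = if w = v then 1 else 0 := by
  rcases eq_or_ne w v with rfl | h
  · simp
  · simp [List.count_cons, h, Ne.symm h]

-- binomial helpers
lemma choose_symm_ab (a b : ℕ) : (a+b).choose a = (a+b).choose b := by
  have h := Nat.choose_symm (Nat.le_add_right a b)
  rw [Nat.add_sub_cancel_left] at h
  exact h.symm

lemma choose_pascal_ab (a b : ℕ) :
    (a+b+2).choose (a+1) = (a+b+1).choose a + (a+b+1).choose b := by
  have h := Nat.choose_succ_succ (a+b+1) a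
  have h2 : (a+b+1).choose (a+1) = (a+b+1).choose b := by
    have := choose_symm_ab (a+1) b
    rwa [show a+1+b = a+b+1 by omega] at this
  rw [show a+b+2 = (a+b+1)+1 by omega, h, h2]

lemma F01_singleton (q : ℕ) (w : Word) : List.count w [Bw q] = F01 0 q w := by
  rw [count_singleton]
  rcases eq_or_ne w (Bw q) with rfl | h
  · rw [if_pos rfl]
    rw [show Bw q = false :: ABpow q from rfl]
    simp [F01]
  · rw [if_neg h]
    rcases w with _ | ⟨a, w'⟩
    · rfl
    · rcases a with _ | _
      · rw [F01]
        split_ifs with h1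
        · obtain ⟨hV, hl, hp, hq⟩ := h1
          exact absurd (V_one_AA_zero_eq q _ hV (by simpa using hp) (by simp) (by omega)) h
        · rfl
      · rw [F01]
        rw [if_neg (by rintro ⟨-, -, -, hp⟩; omega)]

lemma base01 (q : ℕ) (w : Word) : (listShuffles [] (Bw q)).count w = F01 0 q w := by
  rw [listShuffles_nil_left]; exact F01_singleton q w

lemma base10 (p : ℕ) (w : Word) : (listShuffles (Bw p) []).count w = F10 p 0 w := by
  rw [show Bw p = false :: ABpow p from rfl, listShuffles_cons_nil,
    show (false :: ABpow p : Word) = Bw p from rfl]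
  exact F01_singleton p w

lemma F00_singleton (r p q : ℕ) (w : Word) (hr : r = p + q) (hpq : p = 0 ∨ q = 0)
    (hc : Nat.choose (p+q) p = 1) :
    List.count w [ABpow r] = F00 p q w := by
  rw [count_singleton]
  rcases eq_or_ne w (ABpow r) with rfl | h
  · rw [if_pos rfl, F00, if_pos (by refine ⟨by simp, by simp; omega, by simp, by simp⟩)]
    simp [hc]
  · rw [if_neg h, F00, if_neg]
    rintro ⟨hV, hl, hp, hq⟩
    exact h (by rw [V_zero_AA_zero_eq (p+q) w hV (by omega) (by omega), hr])

lemma base00L (q : ℕ) (w : Word) : (listShuffles [] (ABpow q)).count w = F00 0 q w := by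
  rw [listShuffles_nil_left]
  exact F00_singleton q 0 q w (by omega) (Or.inl rfl) (by simp)

lemma base00R (p : ℕ) (w : Word) :
    (listShuffles (ABpow (p+1)) []).count w = F00 (p+1) 0 w := by
  rw [ABpow_succ, show (Bw p : Word) = false :: ABpow p from rfl, listShuffles_cons_nil]
  rw [show (true :: false :: ABpow p : Word) = ABpow (p+1) by rw [ABpow_succ]; rfl]
  exact F00_singleton (p+1) (p+1) 0 w (by omega) (Or.inr rfl) (by simp)

lemma iteEqIte {A B : Prop} [Decidable A] [Decidable B] {x y : ℕ}
    (h : A ↔ B) (hxy : B → x = y) : (if A then x else 0) = (if B then y else 0) := by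
  by_cases hb : B
  · rw [if_pos (h.mpr hb), if_pos hb, hxy hb]
  · rw [if_neg (fun ha => hb (h.mp ha)), if_neg hb]

lemma iteEqAdd {A B C : Prop} [Decidable A] [Decidable B] [Decidable C] {x y z : ℕ}
    (hB : B → A) (hC : C → A)
    (h : A → (if B then y else 0) + (if C then z else 0) = x) :
    (if A then x else 0) = (if B then y else 0) + (if C then z else 0) := by
  by_cases ha : A
  · rw [if_pos ha]; exact (h ha).symm
  · rw [if_neg ha, if_neg (fun hb => ha (hB hb)), if_neg (fun hc => ha (hC hc))]

lemma step01A (p q : ℕ) (w' : Word) : F01 (p+1) q (true :: w') = F11 p q w' := by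
  rcases w' with _ | ⟨b, w''⟩
  · simp [F01, F11]
  · rcases b with _ | _
    · -- w' = false :: w''
      rw [F01, F11]
      refine iteEqIte ?_ ?_
      · constructor
        · rintro ⟨hV, hl, h1, h2⟩
          refine ⟨by simpa using hV, by simp at hl ⊢; omega, by simpa using h2, by simpa using h1⟩
        · rintro ⟨hV, hl, h1, h2⟩
          refine ⟨by simpa using hV, by simp at hl ⊢; omega, by simpa using h2, by simpa using h1⟩
      · rintro ⟨hV, hl, h1, h2⟩
        have hc : countAA (true :: false :: w'') = countAA (false :: w'') := by simp
        rw [hc]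
        set j := countAA (false :: w'') with hj
        rw [show p+1+q - (2*j+1) = (p-j)+(q-j) by omega,
            show p+q-2*j = (p-j)+(q-j) by omega,
            show q - j = q - j from rfl]
        rw [choose_symm_ab (p-j) (q-j)]
    · -- w' = true :: w'' : both sides vanish
      rw [F01, F11]
      rw [if_neg (by rintro ⟨hV, -⟩; simp at hV), if_neg (by rintro ⟨hV, -⟩; simp at hV)]

lemma step01B (p q : ℕ) (w' : Word) : F01 (p+1) q (false :: w') = F00 (p+1) q w' := by
  rw [F01, F00]
  refine iteEqIte ?_ ?_
  · constructor
    · rintro ⟨hV, hl, h1, h2⟩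
      exact ⟨by simpa using hV, by simp at hl ⊢; omega, by simpa using h1, by simpa using h2⟩
    · rintro ⟨hV, hl, h1, h2⟩
      exact ⟨by simpa using hV, by simp at hl ⊢; omega, by simpa using h1, by simpa using h2⟩
  · rintro ⟨hV, hl, h1, h2⟩
    rw [countAA_false_cons]
    set j := countAA w' with hj
    rw [show p+1+q - 2*j = (p+1-j)+(q-j) by omega]
    rw [choose_symm_ab (p+1-j) (q-j)]

lemma step10A (p q : ℕ) (w' : Word) : F01 (q+1) p (true :: w') = F11 p q w' := by
  rcases w' with _ | ⟨b, w''⟩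
  · simp [F01, F11]
  · rcases b with _ | _
    · rw [F01, F11]
      refine iteEqIte ?_ ?_
      · constructor
        · rintro ⟨hV, hl, h1, h2⟩
          refine ⟨by simpa using hV, by simp at hl ⊢; omega, by simpa using h1, by simpa using h2⟩
        · rintro ⟨hV, hl, h1, h2⟩
          refine ⟨by simpa using hV, by simp at hl ⊢; omega, by simpa using h1, by simpa using h2⟩
      · rintro ⟨hV, hl, h1, h2⟩
        have hc : countAA (true :: false :: w'') = countAA (false :: w'') := by simp
        rw [hc]
        set j := countAA (false :: w'') with hj
        rw [show q+1+p - (2*j+1) = p+q-2*j by omega]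
    · rw [F01, F11]
      rw [if_neg (by rintro ⟨hV, -⟩; simp at hV), if_neg (by rintro ⟨hV, -⟩; simp at hV)]

lemma step10B (p q : ℕ) (w' : Word) : F01 (q+1) p (false :: w') = F00 p (q+1) w' := by
  rw [F01, F00]
  refine iteEqIte ?_ ?_
  · constructor
    · rintro ⟨hV, hl, h1, h2⟩
      exact ⟨by simpa using hV, by simp at hl ⊢; omega, by simpa using h2, by simpa using h1⟩
    · rintro ⟨hV, hl, h1, h2⟩
      exact ⟨by simpa using hV, by simp at hl ⊢; omega, by simpa using h2, by simpa using h1⟩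
  · rintro ⟨hV, hl, h1, h2⟩
    rw [countAA_false_cons]
    set j := countAA w' with hj
    rw [show q+1+p - 2*j = p+(q+1)-2*j by omega]

lemma step00 (p q : ℕ) (w' : Word) :
    F00 (p+1) (q+1) (true :: w') = F01 (q+1) p w' + F01 (p+1) q w' := by
  rcases w' with _ | ⟨b, w''⟩
  · rw [F00, if_neg (by rintro ⟨-, hl, -⟩; simp at hl; omega)]; simp
  · rcases b with _ | _
    · -- w' = false :: w''  (no AA at the front)
      rw [F00, F01, F01]
      refine iteEqAdd ?_ ?_ ?_
      · rintro ⟨hV, hl, h1, h2⟩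
        exact ⟨by simpa using hV, by simp at hl ⊢; omega, by simp at h2 ⊢; omega, by simpa using h1⟩
      · rintro ⟨hV, hl, h1, h2⟩
        exact ⟨by simpa using hV, by simp at hl ⊢; omega, by simpa using h1, by simp at h2 ⊢; omega⟩
      · rintro ⟨hV, hl, h1, h2⟩
        have hc : countAA (true :: false :: w'') = countAA (false :: w'') := by simp
        rw [hc] at h1 h2 ⊢
        have hV' : V 1 (false :: w'') = true := by simpa using hV
        have hl' : w''.length = 2*(p+q) + 2 := by simp at hl; omega
        set j := countAA (false :: w'') with hj
        by_cases hp : j ≤ p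
        · by_cases hq : j ≤ q
          · rw [if_pos ⟨hV', by simp; omega, hq.trans (by omega), hp⟩,
                if_pos ⟨hV', by simp; omega, hp.trans (by omega), hq⟩]
            rw [show q+1+p - 2*j = (p-j)+(q-j)+1 by omega,
                show p+1+q - 2*j = (p-j)+(q-j)+1 by omega,
                show p+1+(q+1) - 2*j = (p-j)+(q-j)+2 by omega,
                show p+1-j = (p-j)+1 by omega,
                show p - j = p - j from rfl,
                show q - j = q - j from rfl]
            rw [choose_pascal_ab (p-j) (q-j)]
            ring
          · -- j = q+1 ≤ p+1, so j ≤ p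
            have hq1 : j = q + 1 := by omega
            rw [if_pos ⟨hV', by simp; omega, by omega, hp⟩,
                if_neg (by rintro ⟨-, -, -, h⟩; omega)]
            rw [show q+1+p-2*j = p-j by omega, show p+1+(q+1)-2*j = p+1-j by omega,
                Nat.choose_self, Nat.choose_self]
            ring
        · by_cases hq : j ≤ q
          · have hp1 : j = p + 1 := by omega
            rw [if_neg (by rintro ⟨-, -, -, h⟩; omega),
                if_pos ⟨hV', by simp; omega, by omega, hq⟩]
            rw [show p+1+q-2*j = q-j by omega, show p+1+(q+1)-2*j = q+1-j by omega,
                Nat.choose_self, show p+1-j = 0 by omega, Nat.choose_zero_right]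
            ring
          · -- tight impossible case: j = p+1 = q+1
            exfalso
            have hineq := V_ineq (false :: w'') 1 hV'
            simp only [bonus_one_false, List.length_cons] at hineq
            rw [← hj] at hineq
            omega
    · -- w' = true :: w''  (AA at the front)
      rw [F00, F01, F01]
      refine iteEqAdd ?_ ?_ ?_
      · rintro ⟨hV, hl, h1, h2⟩
        exact ⟨by simpa using hV, by simp at hl ⊢; omega, by simp; omega, by simp; omega⟩
      · rintro ⟨hV, hl, h1, h2⟩
        exact ⟨by simpa using hV, by simp at hl ⊢; omega, by simp at h1 ⊢; omega,
          by simp at h2 ⊢; omega⟩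
      · rintro ⟨hV, hl, h1, h2⟩
        have hc : countAA (true :: true :: w'') = countAA (true :: w'') + 1 := by simp
        rw [hc] at h1 h2 ⊢
        have hV' : V 1 (true :: w'') = true := by simpa using hV
        have hl' : (true :: w'').length = 2*(q+1+p)+1 := by simp at hl ⊢; omega
        set j := countAA (true :: w'') with hj
        have hp : j + 1 ≤ p + 1 := h1
        have hq : j + 1 ≤ q + 1 := h2
        rw [if_pos ⟨hV', hl', by omega, by omega⟩,
            if_pos ⟨hV', by simp at hl' ⊢; omega, by omega, by omega⟩]
        rw [show q+1+p - (2*j+1) = (p-j)+(q-j) by omega,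
            show p+1+q - (2*j+1) = (p-j)+(q-j) by omega,
            show p+1+(q+1) - 2*(j+1) = (p-j)+(q-j) by omega,
            show p+1-(j+1) = p-j by omega]
        rw [choose_symm_ab (p-j) (q-j)]
        rw [pow_succ]
        ring

lemma step11 (p q : ℕ) (w' : Word) :
    F11 p q (false :: w') = F01 p q w' + F01 q p w' := by
  rcases w' with _ | ⟨b, w''⟩
  · rw [F11, if_neg (by rintro ⟨hV, -⟩; simp at hV)]; simp
  · rcases b with _ | _
    · -- w' = false :: w''
      rw [F11, F01, F01]
      simp only [countAA_false_cons]
      refine iteEqAdd ?_ ?_ ?_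
      · rintro ⟨hV, hl, h1, h2⟩
        exact ⟨by simpa using hV, by simp at hl ⊢; omega, h1, h2⟩
      · rintro ⟨hV, hl, h1, h2⟩
        exact ⟨by simpa using hV, by simp at hl ⊢; omega, h2, h1⟩
      · rintro ⟨hV, hl, h1, h2⟩
        have hV' : V 1 (false :: w'') = true := by simpa using hV
        have hl' : (false :: w'').length = 2*(p+q)+1 := by simp at hl ⊢; omega
        set j := countAA w'' with hj
        rw [if_pos ⟨hV', hl', h1, h2⟩, if_pos ⟨hV', by simp at hl' ⊢; omega, h2, h1⟩]
        rw [show p+q-2*j = (p-j)+(q-j) by omega,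
            show q+p-2*j = (p-j)+(q-j) by omega]
        rw [choose_symm_ab (p-j) (q-j)]
        ring
    · -- w' = true :: w''
      rw [F11, F01, F01]
      simp only [countAA_false_cons]
      refine iteEqAdd ?_ ?_ ?_
      · rintro ⟨hV, hl, h1, h2⟩
        exact ⟨by simpa using hV, by simp at hl ⊢; omega, by omega, h1⟩
      · rintro ⟨hV, hl, h1, h2⟩
        exact ⟨by simpa using hV, by simp at hl ⊢; omega, h1, by omega⟩
      · rintro ⟨hV, hl, h1, h2⟩
        have hV' : V 1 (true :: w'') = true := by simpa using hV
        have hl' : (true :: w'').length = 2*(p+q)+1 := by simp at hl ⊢; omega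
        set j := countAA (true :: w'') with hj
        by_cases hp : j + 1 ≤ p
        · by_cases hq : j + 1 ≤ q
          · rw [if_pos ⟨hV', hl', by omega, hp⟩, if_pos ⟨hV', by simp at hl' ⊢; omega, by omega, hq⟩]
            obtain ⟨a, ha⟩ : ∃ a, p - j = a + 1 := ⟨p - j - 1, by omega⟩
            obtain ⟨b, hb⟩ : ∃ b, q - j = b + 1 := ⟨q - j - 1, by omega⟩
            rw [show p+q-2*j = a+b+2 by omega, show p-j = a+1 by omega,
                show p+q-(2*j+1) = a+b+1 by omega, show q-j = b+1 by omega,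
                show q+p-(2*j+1) = a+b+1 by omega]
            rw [choose_pascal_ab a b,
                show (a+b+1).choose (b+1) = (a+b+1).choose a by
                  have := choose_symm_ab a (b+1); rw [show a+(b+1) = a+b+1 by omega] at this
                  exact this.symm,
                show (a+b+1).choose (a+1) = (a+b+1).choose b by
                  have := choose_symm_ab (a+1) b; rwa [show a+1+b = a+b+1 by omega] at this]
            ring
          · -- j = q
            have hq1 : j = q := by omega
            rw [if_pos ⟨hV', hl', by omega, hp⟩, if_neg (by rintro ⟨-, -, -, h⟩; omega)]
            rw [show p+q-2*j = p-j by omega, show p+q-(2*j+1) = p-j-1 by omega,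
                show q-j = 0 by omega, Nat.choose_zero_right]
            have : (p-j).choose (p-j) = 1 := Nat.choose_self _
            rw [this]
            ring
        · by_cases hq : j + 1 ≤ q
          · have hp1 : j = p := by omega
            rw [if_neg (by rintro ⟨-, -, -, h⟩; omega), if_pos ⟨hV', by simp at hl' ⊢; omega, by omega, hq⟩]
            rw [show p+q-2*j = q-j by omega, show q+p-(2*j+1) = q-j-1 by omega,
                show p-j = 0 by omega, Nat.choose_zero_right, Nat.choose_zero_right]
            ring
          · -- tight impossible: j = p = q
            exfalso
            have hineq := V_ineq (true :: w'') 1 hV'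
            simp only [bonus_one_true, List.length_cons] at hineq
            rw [← hj] at hineq
            simp at hl'
            omega

lemma main_count : ∀ (w : Word) (p q : ℕ),
    ((listShuffles (ABpow p) (ABpow q)).count w = F00 p q w)
  ∧ ((listShuffles (ABpow p) (Bw q)).count w = F01 p q w)
  ∧ ((listShuffles (Bw p) (ABpow q)).count w = F01 q p w)
  ∧ ((listShuffles (Bw p) (Bw q)).count w = F11 p q w) := by
  intro w
  induction w with
  | nil =>
    intro p q
    refine ⟨?_, ?_, ?_, ?_⟩
    · rcases p with _ | p
      · exact base00L q _
      rcases q with _ | q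
      · exact base00R p _
      rw [ABpow_succ p, ABpow_succ q, show Bw p = false :: ABpow p from rfl,
        show Bw q = false :: ABpow q from rfl, listShuffles_cons_cons, List.count_append,
        count_map_cons_nil, count_map_cons_nil]
      rw [F00, if_neg (by rintro ⟨-, hl, -⟩; simp at hl)]
    · rcases p with _ | p
      · exact base01 q _
      rw [ABpow_succ p, show Bw p = false :: ABpow p from rfl,
        show Bw q = false :: ABpow q from rfl, listShuffles_cons_cons, List.count_append,
        count_map_cons_nil, count_map_cons_nil]
      simp
    · rcases q with _ | q
      · exact base10 p _
      rw [ABpow_succ q, show Bw p = false :: ABpow p from rfl,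
        show Bw q = false :: ABpow q from rfl, listShuffles_cons_cons, List.count_append,
        count_map_cons_nil, count_map_cons_nil]
      simp
    · rw [show Bw p = false :: ABpow p from rfl,
        show Bw q = false :: ABpow q from rfl, listShuffles_cons_cons, List.count_append,
        count_map_cons_nil, count_map_cons_nil]
      rw [F11, if_neg (by rintro ⟨hV, -⟩; simp at hV)]
  | cons a w' ih =>
    intro p q
    refine ⟨?_, ?_, ?_, ?_⟩
    · -- (AB)^p ⧢ (AB)^q
      rcases p with _ | p
      · exact base00L q _
      rcases q with _ | q
      · exact base00R p _
      rw [ABpow_succ p, ABpow_succ q, show Bw p = false :: ABpow p from rfl,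
        show Bw q = false :: ABpow q from rfl, listShuffles_cons_cons, List.count_append,
        count_map_cons, count_map_cons]
      rcases a with _ | _
      · rw [if_neg (by simp), if_neg (by simp)]
        rw [F00, if_neg (by rintro ⟨hV, -⟩; simp at hV)]
      · rw [if_pos rfl, if_pos rfl]
        rw [show (false :: ABpow p : Word) = Bw p from rfl,
            show (false :: ABpow q : Word) = Bw q from rfl,
            show (true :: Bw q : Word) = ABpow (q+1) from (ABpow_succ q).symm,
            show (true :: Bw p : Word) = ABpow (p+1) from (ABpow_succ p).symm]
        rw [(ih p (q+1)).2.2.1, (ih (p+1) q).2.1]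
        exact (step00 p q w').symm
    · -- (AB)^p ⧢ Bw q
      rcases p with _ | p
      · exact base01 q _
      rw [ABpow_succ p, show Bw p = false :: ABpow p from rfl,
        show Bw q = false :: ABpow q from rfl, listShuffles_cons_cons, List.count_append,
        count_map_cons, count_map_cons]
      rcases a with _ | _
      · rw [if_neg (by simp), if_pos rfl]
        rw [show (true :: false :: ABpow p : Word) = ABpow (p+1) from (ABpow_succ p).symm]
        rw [(ih (p+1) q).1]
        rw [Nat.zero_add]
        exact (step01B p q w').symm
      · rw [if_pos rfl, if_neg (by simp)]
        rw [show (false :: ABpow p : Word) = Bw p from rfl,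
            show (false :: ABpow q : Word) = Bw q from rfl]
        rw [(ih p q).2.2.2]
        rw [Nat.add_zero]
        exact (step01A p q w').symm
    · -- Bw p ⧢ (AB)^q
      rcases q with _ | q
      · exact base10 p _
      rw [ABpow_succ q, show Bw p = false :: ABpow p from rfl,
        show Bw q = false :: ABpow q from rfl, listShuffles_cons_cons, List.count_append,
        count_map_cons, count_map_cons]
      rcases a with _ | _
      · rw [if_pos rfl, if_neg (by simp)]
        rw [show (true :: false :: ABpow q : Word) = ABpow (q+1) from (ABpow_succ q).symm]
        rw [(ih p (q+1)).1]
        rw [Nat.add_zero]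
        exact (step10B p q w').symm
      · rw [if_neg (by simp), if_pos rfl]
        rw [show (false :: ABpow p : Word) = Bw p from rfl,
            show (false :: ABpow q : Word) = Bw q from rfl]
        rw [(ih p q).2.2.2]
        rw [Nat.zero_add]
        exact (step10A p q w').symm
    · -- Bw p ⧢ Bw q
      rw [show Bw p = false :: ABpow p from rfl,
        show Bw q = false :: ABpow q from rfl, listShuffles_cons_cons, List.count_append,
        count_map_cons, count_map_cons]
      rcases a with _ | _
      · rw [if_pos rfl, if_pos rfl]
        rw [show (false :: ABpow p : Word) = Bw p from rfl,
            show (false :: ABpow q : Word) = Bw q from rfl]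
        rw [(ih p q).2.1, (ih p q).2.2.1]
        exact (step11 p q w').symm
      · rw [if_neg (by simp), if_neg (by simp)]
        rw [F11, if_neg (by rintro ⟨hV, -⟩; simp at hV)]

lemma list_single_sum (L : List Word) (w : Word) :
    ((L.map fun x => Finsupp.single x (1 : ℤ)).sum) w = L.count w := by
  induction L with
  | nil => simp
  | cons x L ih =>
    rw [List.map_cons, List.sum_cons, Finsupp.add_apply, ih, List.count_cons]
    rcases eq_or_ne w x with rfl | h
    · simp [add_comm]
    · simp [Finsupp.single_apply, h, Ne.symm h]

lemma wordShuffle_apply (u v w : Word) :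
    wordShuffle u v w = ((listShuffles u v).count w : ℤ) := by
  rw [wordShuffle]; exact list_single_sum _ w

lemma T_apply (p q j : ℕ) (w : Word) :
    T p q j w = if (listShuffles (ABpow p) (ABpow q)).count w ≠ 0 ∧ countAA w = j
      then 1 else 0 := by
  classical
  rw [T, Finsupp.finset_sum_apply]
  simp only [Finsupp.single_apply]
  rw [Finset.sum_ite_eq' _ w (fun _ => (1 : ℤ))]
  congr 1
  simp only [Finset.mem_filter, Finsupp.mem_support_iff, wordShuffle_apply, eq_iff_iff]
  constructor
  · rintro ⟨h1, h2⟩; exact ⟨by exact_mod_cast h1, h2⟩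
  · rintro ⟨h1, h2⟩; exact ⟨by exact_mod_cast h1, h2⟩


/-- For all non-negative integers `p`, `q`:
`(AB)^p ⧢ (AB)^q = ∑_{j=0}^{min(p,q)} C(p+q−2j, p−j) ⬝ 4^j ⬝ T_{p+q,j}`. -/
theorem ABpow_shuffle_eq_sum_T (p q : ℕ) :
    wordShuffle (ABpow p) (ABpow q)
      = ∑ j ∈ Finset.range (min p q + 1),
          ((Nat.choose (p + q - 2 * j) (p - j) * 4 ^ j : ℤ)) • T p q j := by
  ext w
  rw [Finsupp.finset_sum_apply, wordShuffle_apply]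
  simp only [Finsupp.smul_apply, smul_eq_mul]
  by_cases h0 : (listShuffles (ABpow p) (ABpow q)).count w = 0
  · rw [h0]
    rw [Finset.sum_eq_zero]
    · simp
    intro j hj
    rw [T_apply, if_neg (by rintro ⟨hc, -⟩; exact hc h0)]
    ring
  · have hF := (main_count w p q).1
    rw [F00] at hF
    split_ifs at hF with hg
    swap
    · exact absurd hF h0
    obtain ⟨hV, hl, hp, hq⟩ := hg
    rw [hF]
    rw [Finset.sum_eq_single (countAA w)]
    · rw [T_apply, if_pos ⟨h0, rfl⟩]
      push_cast
      ring
    · intro b hb hneq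
      rw [T_apply, if_neg (by rintro ⟨-, hc⟩; exact hneq hc.symm)]
      ring
    · intro habs
      exact absurd (Finset.mem_range.mpr (by omega)) habs
end

section
/- For all positive integers m and n, the following identity of rational numbers holds: Σ_{k=1−n}^{n} (−1)^k k^(2m−1) / (2n−2k+1) · binom(4n−1, 2n+2k−1) = Σ_{j=1}^{m} Σ_{k=1−j}^{j} 4^(n−j) (−1)^k k^(2m−1) / (2n−2j+1) · binom(2n−1, 2j−1) · binom(2j−1, j−k). -/
open Polynomial Finset

namespace CombIdentOddAux

lemma coeffB (M t : ℕ) :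
    ((1 + X ^ 2 : ℚ[X]) ^ M).coeff t = if 2 ∣ t then (M.choose (t / 2) : ℚ) else 0 := by
  have h : (1 + X ^ 2 : ℚ[X]) ^ M
      = ∑ r ∈ range (M + 1), Polynomial.C (M.choose r : ℚ) * X ^ (2 * r) := by
    rw [add_comm, add_pow]
    refine Finset.sum_congr rfl fun r hr => ?_
    rw [one_pow, mul_one, ← pow_mul, ← Polynomial.C_eq_natCast]
    ring
  rw [h, Polynomial.finset_sum_coeff]
  simp only [Polynomial.coeff_C_mul, Polynomial.coeff_X_pow, mul_ite, mul_one, mul_zero]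
  by_cases h2 : 2 ∣ t
  · obtain ⟨s, rfl⟩ := h2
    rw [if_pos ⟨s, rfl⟩]
    by_cases hs : s ≤ M
    · rw [Finset.sum_eq_single s]
      · simp
      · intro b _ hbs
        rw [if_neg (by omega)]
      · intro hs'
        exact absurd (Finset.mem_range.2 (Nat.lt_succ_of_le hs)) hs'
    · rw [Finset.sum_eq_zero, eq_comm]
      · rw [Nat.cast_eq_zero, Nat.mul_div_cancel_left _ (by norm_num : 0 < 2)]
        exact Nat.choose_eq_zero_of_lt (by omega)
      · intro b hb
        rw [if_neg (by simp only [Finset.mem_range] at hb; omega)]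
  · rw [if_neg h2, Finset.sum_eq_zero]
    intro b _
    rw [if_neg (fun h => h2 ⟨b, h⟩)]

lemma sum_odd_only (f : ℕ → ℚ) (h : ∀ i, Even i → f i = 0) :
    ∀ n : ℕ, ∑ i ∈ range (2 * n + 1), f i = ∑ d ∈ range n, f (2 * d + 1)
  | 0 => by simpa using h 0 Even.zero
  | n + 1 => by
    have e : 2 * (n + 1) + 1 = (2 * n + 1) + 1 + 1 := by ring
    rw [e, Finset.sum_range_succ, Finset.sum_range_succ, sum_odd_only f h n,
      Finset.sum_range_succ, h (2 * n + 1 + 1) ⟨n + 1, by ring⟩, add_zero]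

lemma keyNat (n a : ℕ) (hn : 0 < n) :
    ((4 * n).choose (2 * a + 1) : ℚ)
      = ∑ d ∈ range n, 2 ^ (2 * (n - 1 - d) + 1) * ((2 * n).choose (2 * d + 1) : ℚ) *
          (if a ≤ n + d then ((2 * d + 1).choose (n + d - a) : ℚ) else 0) := by
  set c : ℕ → ℚ := fun i =>
    ((2 * X : ℚ[X]) ^ i * (1 + X ^ 2) ^ (2 * n - i) * ((2 * n).choose i : ℚ[X])).coeff (2 * a + 1)
    with hc
  have hterm : ∀ i : ℕ, c i = 2 ^ i * ((2 * n).choose i : ℚ) *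
      (if i ≤ 2 * a + 1 then
        (if 2 ∣ (2 * a + 1 - i) then ((2 * n - i).choose ((2 * a + 1 - i) / 2) : ℚ) else 0)
       else 0) := by
    intro i
    have e1 : (2 * X : ℚ[X]) ^ i * (1 + X ^ 2) ^ (2 * n - i) * ((2 * n).choose i : ℚ[X])
        = Polynomial.C ((2 : ℚ) ^ i * ((2 * n).choose i : ℚ)) * ((1 + X ^ 2) ^ (2 * n - i) * X ^ i) := by
      rw [← Polynomial.C_eq_natCast, mul_pow,
        show ((2 : ℚ[X])) ^ i = Polynomial.C ((2 : ℚ) ^ i) by rw [map_pow, map_ofNat],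
        map_mul]
      ring
    rw [hc]
    simp only [e1, Polynomial.coeff_C_mul, Polynomial.coeff_mul_X_pow', coeffB]
    try (split_ifs <;> try ring)
  have hzero : ∀ i, Even i → c i = 0 := by
    intro i hi
    obtain ⟨w, rfl⟩ := hi
    rw [hterm]
    by_cases h1 : w + w ≤ 2 * a + 1
    · rw [if_pos h1, if_neg (by omega), mul_zero]
    · rw [if_neg h1, mul_zero]
  have hsum : ((4 * n).choose (2 * a + 1) : ℚ) = ∑ i ∈ range (2 * n + 1), c i := by
    have hpoly : ((1 : ℚ[X]) + X) ^ (4 * n)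
        = ∑ i ∈ range (2 * n + 1), (2 * X : ℚ[X]) ^ i * (1 + X ^ 2) ^ (2 * n - i) *
            ((2 * n).choose i : ℚ[X]) := by
      rw [show 4 * n = 2 * (2 * n) by ring, pow_mul,
        show ((1 : ℚ[X]) + X) ^ 2 = 2 * X + (1 + X ^ 2) by ring, add_pow]
    have := congrArg (fun p : ℚ[X] => p.coeff (2 * a + 1)) hpoly
    rwa [Polynomial.coeff_one_add_X_pow, Polynomial.finset_sum_coeff] at this
  rw [hsum, sum_odd_only c hzero n, ← Finset.sum_range_reflect (fun d => c (2 * d + 1)) n]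
  refine Finset.sum_congr rfl fun d hd => ?_
  rw [Finset.mem_range] at hd
  rw [hterm]
  have h1 : (2 * n).choose (2 * (n - 1 - d) + 1) = (2 * n).choose (2 * d + 1) := by
    rw [show 2 * (n - 1 - d) + 1 = 2 * n - (2 * d + 1) by omega]
    exact Nat.choose_symm (by omega)
  rw [h1]
  congr 1
  by_cases hc1 : 2 * (n - 1 - d) + 1 ≤ 2 * a + 1
  · rw [if_pos hc1, if_pos ⟨a + d + 1 - n, by omega⟩]
    have h2 : (2 * a + 1 - (2 * (n - 1 - d) + 1)) / 2 = a + d + 1 - n := by omega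
    have h3 : 2 * n - (2 * (n - 1 - d) + 1) = 2 * d + 1 := by omega
    rw [h2, h3]
    by_cases hc2 : a ≤ n + d
    · rw [if_pos hc2]
      rw [show n + d - a = (2 * d + 1) - (a + d + 1 - n) by omega]
      exact_mod_cast congrArg (Nat.cast (R := ℚ)) (Nat.choose_symm (by omega)).symm
    · rw [if_neg hc2, Nat.choose_eq_zero_of_lt (by omega), Nat.cast_zero]
  · rw [if_neg hc1, if_pos (by omega), Nat.choose_eq_zero_of_lt (by omega), Nat.cast_zero]

lemma alt_sum_eval : ∀ N : ℕ, ∀ P : ℚ[X], P.natDegree < N →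
    ∑ i ∈ range (N + 1), (-1 : ℚ) ^ i * (N.choose i : ℚ) * P.eval (i : ℚ) = 0 := by
  intro N
  induction N with
  | zero => intro P h; omega
  | succ N IH =>
    intro P hP
    set Q : ℚ[X] := P.comp (X + 1) - P with hQdef
    have hQeval : ∀ i : ℕ, Q.eval (i : ℚ) = P.eval ((i : ℚ) + 1) - P.eval (i : ℚ) := by
      intro i
      simp [hQdef, Polynomial.eval_comp]
    set u : ℕ → ℚ := fun i => (-1 : ℚ) ^ i * (N.choose i : ℚ) * P.eval (i : ℚ) with hu
    have hsplit : ∑ i ∈ range (N + 2), (-1 : ℚ) ^ i * ((N + 1).choose i : ℚ) * P.eval (i : ℚ)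
        = -∑ i ∈ range (N + 1), (-1 : ℚ) ^ i * (N.choose i : ℚ) * Q.eval (i : ℚ) := by
      rw [Finset.sum_range_succ']
      have h2 : ∀ i : ℕ, (-1 : ℚ) ^ (i + 1) * ((N + 1).choose (i + 1) : ℚ) * P.eval (((i + 1 : ℕ)) : ℚ)
          = u (i + 1) - (-1 : ℚ) ^ i * (N.choose i : ℚ) * P.eval ((i : ℚ) + 1) := by
        intro i
        rw [hu, Nat.choose_succ_succ]
        push_cast
        ring
      rw [Finset.sum_congr rfl fun i _ => h2 i, Finset.sum_sub_distrib]
      have h3 : ∑ i ∈ range (N + 1), u (i + 1) = ∑ i ∈ range (N + 1), u i - u 0 := by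
        have h4 := Finset.sum_range_succ' u (N + 1)
        have h5 : ∑ i ∈ range (N + 2), u i = ∑ i ∈ range (N + 1), u i := by
          rw [Finset.sum_range_succ, hu]
          simp [Nat.choose_succ_self]
        rw [h5] at h4
        linarith
      rw [h3]
      have h6 : ((-1 : ℚ) ^ (0:ℕ) * ((N + 1).choose 0 : ℚ) * P.eval ((0 : ℕ) : ℚ)) = u 0 := by
        rw [hu]; norm_num
      rw [h6]
      have h8 : ∀ i : ℕ, (-1 : ℚ) ^ i * (N.choose i : ℚ) * Q.eval (i : ℚ)
          = (-1 : ℚ) ^ i * (N.choose i : ℚ) * P.eval ((i : ℚ) + 1) - u i := by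
        intro i; rw [hQeval i, hu]; ring
      rw [Finset.sum_congr rfl fun i _ => h8 i, Finset.sum_sub_distrib]
      ring
    rw [hsplit]
    by_cases hQ0 : Q = 0
    · simp [hQ0]
    · have hPne : P ≠ 0 := by
        rintro rfl
        simp [hQdef] at hQ0
      have hXd : (X + 1 : ℚ[X]).natDegree = 1 := by
        rw [show (X + 1 : ℚ[X]) = X + Polynomial.C 1 by rw [Polynomial.C_1],
          Polynomial.natDegree_X_add_C]
      have hXlc : (X + 1 : ℚ[X]).leadingCoeff = 1 := by
        rw [show (X + 1 : ℚ[X]) = X + Polynomial.C 1 by rw [Polynomial.C_1]]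
        exact (Polynomial.monic_X_add_C 1).leadingCoeff
      have hlc : (P.comp (X + 1)).leadingCoeff = P.leadingCoeff := by
        rw [Polynomial.leadingCoeff_comp (by rw [hXd]; norm_num), hXlc, one_pow, mul_one]
      have hcompne : P.comp (X + 1) ≠ 0 := by
        intro h
        apply hPne
        rw [← Polynomial.leadingCoeff_eq_zero, ← hlc, h, Polynomial.leadingCoeff_zero]
      have hdegeq : (P.comp (X + 1)).degree = P.degree := by
        rw [Polynomial.degree_eq_natDegree hcompne, Polynomial.degree_eq_natDegree hPne,
          Polynomial.natDegree_comp, hXd, mul_one]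
      have hdlt : Q.degree < P.degree := by
        have := Polynomial.degree_sub_lt hdegeq hcompne hlc
        rwa [hdegeq] at this
      have hnd : Q.natDegree < N := by
        have h7 := Polynomial.natDegree_lt_natDegree hQ0 hdlt
        omega
      rw [IH Q hnd, neg_zero]

lemma Dvanish (m j : ℕ) (hm : 0 < m) (hmj : m < j) :
    ∑ k ∈ Icc (1 - (j : ℤ)) (j : ℤ),
      (((k.negOnePow : ℤ) * k ^ (2 * m - 1) : ℤ) : ℚ) *
        ((2 * j - 1).choose ((j : ℤ) - k).toNat : ℚ) = 0 := by
  have hj : 0 < j := lt_of_le_of_lt (Nat.zero_le m) hmj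
  set P : ℚ[X] := (Polynomial.C (j : ℚ) - X) ^ (2 * m - 1) with hP
  have hdeg : P.natDegree < 2 * j - 1 := by
    rw [hP, Polynomial.natDegree_pow,
      show (Polynomial.C (j : ℚ) - X) = -(X - Polynomial.C (j : ℚ)) by ring,
      Polynomial.natDegree_neg, Polynomial.natDegree_X_sub_C, mul_one]
    omega
  have halt := alt_sum_eval (2 * j - 1) P hdeg
  have hre : ∑ k ∈ Icc (1 - (j : ℤ)) (j : ℤ),
      (((k.negOnePow : ℤ) * k ^ (2 * m - 1) : ℤ) : ℚ) *
        ((2 * j - 1).choose ((j : ℤ) - k).toNat : ℚ)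
      = ∑ i ∈ range (2 * j - 1 + 1), (-1 : ℚ) ^ j *
          ((-1 : ℚ) ^ i * ((2 * j - 1).choose i : ℚ) * P.eval (i : ℚ)) := by
    refine Finset.sum_nbij' (fun k => ((j : ℤ) - k).toNat) (fun i => (j : ℤ) - (i : ℕ))
      ?_ ?_ ?_ ?_ ?_
    · intro k hk
      rw [Finset.mem_Icc] at hk
      rw [Finset.mem_range]
      omega
    · intro i hi
      rw [Finset.mem_range] at hi
      rw [Finset.mem_Icc]
      omega
    · intro k hk
      rw [Finset.mem_Icc] at hk
      omega
    · intro i hi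
      rw [Finset.mem_range] at hi
      omega
    · intro k hk
      rw [Finset.mem_Icc] at hk
      set i := ((j : ℤ) - k).toNat with hi
      have hiz : (i : ℤ) = (j : ℤ) - k := by omega
      have hsignZ : (k.negOnePow : ℤ) = (-1 : ℤ) ^ j * (-1 : ℤ) ^ i := by
        rw [show k = (j : ℤ) - (i : ℤ) by omega, Int.negOnePow_sub, Units.val_mul,
          Int.coe_negOnePow_natCast, Int.coe_negOnePow_natCast]
      have hsign : ((k.negOnePow : ℤ) : ℚ) = (-1 : ℚ) ^ j * (-1 : ℚ) ^ i := by
        exact_mod_cast congrArg (fun z : ℤ => (z : ℚ)) hsignZ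
      have h9 : ((i : ℕ) : ℚ) = (j : ℚ) - (k : ℚ) := by
        exact_mod_cast congrArg (fun z : ℤ => (z : ℚ)) hiz
      have heval : P.eval ((i : ℕ) : ℚ) = (k : ℚ) ^ (2 * m - 1) := by
        rw [hP]
        simp only [Polynomial.eval_pow, Polynomial.eval_sub, Polynomial.eval_C,
          Polynomial.eval_X, h9]
        ring_nf
      rw [Int.cast_mul, hsign, heval]
      push_cast
      ring
  rw [hre, ← Finset.mul_sum, halt, mul_zero]

lemma hkey (n : ℕ) (hn : 0 < n) (k : ℤ) (hk1 : 1 - (n : ℤ) ≤ k) (hk2 : k ≤ (n : ℤ)) :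
    ((4 * n - 1).choose (2 * (n : ℤ) + 2 * k - 1).toNat : ℚ) / (2 * (n : ℚ) - 2 * (k : ℚ) + 1)
    = ∑ j ∈ Icc 1 n, (4 : ℚ) ^ ((n : ℤ) - (j : ℤ)) / (2 * (n : ℚ) - 2 * (j : ℚ) + 1) *
        ((2 * n - 1).choose (2 * j - 1) : ℚ) *
        (if k ≤ (j : ℤ) then ((2 * j - 1).choose ((j : ℤ) - k).toNat : ℚ) else 0) := by
  obtain ⟨a, rfl⟩ : ∃ a : ℕ, k = (a : ℤ) + 1 - n := ⟨(k + n - 1).toNat, by omega⟩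
  have ha2 : a + 1 ≤ 2 * n := by omega
  -- left side equals choose (4n, 2a+1) / (4n)
  have hidx : (2 * (n : ℤ) + 2 * ((a : ℤ) + 1 - (n : ℤ)) - 1).toNat = 2 * a + 1 := by omega
  have hkQ : ((((a : ℤ) + 1 - (n : ℤ)) : ℤ) : ℚ) = (a : ℚ) + 1 - (n : ℚ) := by push_cast; ring
  have hden : 2 * (n : ℚ) - 2 * ((((a : ℤ) + 1 - (n : ℤ)) : ℤ) : ℚ) + 1
      = 4 * (n : ℚ) - 2 * (a : ℚ) - 1 := by rw [hkQ]; ring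
  have hdenpos : (0 : ℚ) < 4 * (n : ℚ) - 2 * (a : ℚ) - 1 := by
    have h1 : (a : ℚ) + 1 ≤ 2 * (n : ℚ) := by exact_mod_cast ha2
    linarith
  have h4n : (0 : ℚ) < 4 * (n : ℚ) := by positivity
  have hchooseL : ((4 * n - 1).choose (2 * a + 1) : ℚ) * (4 * (n : ℚ))
      = ((4 * n).choose (2 * a + 1) : ℚ) * (4 * (n : ℚ) - 2 * (a : ℚ) - 1) := by
    have h := Nat.choose_mul_succ_eq (4 * n - 1) (2 * a + 1)
    have e1 : 4 * n - 1 + 1 = 4 * n := by omega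
    rw [e1] at h
    have := congrArg (fun x : ℕ => (x : ℚ)) h
    push_cast [Nat.cast_sub (by omega : 2 * a + 1 ≤ 4 * n)] at this
    convert this using 2 <;> push_cast <;> ring
  have hL : ((4 * n - 1).choose (2 * (n : ℤ) + 2 * ((a : ℤ) + 1 - (n : ℤ)) - 1).toNat : ℚ) /
        (2 * (n : ℚ) - 2 * ((((a : ℤ) + 1 - (n : ℤ)) : ℤ) : ℚ) + 1)
      = ((4 * n).choose (2 * a + 1) : ℚ) / (4 * (n : ℚ)) := by
    rw [hidx, hden, div_eq_div_iff (by linarith) (by linarith)]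
    linarith [hchooseL]
  rw [hL, keyNat n a hn]
  rw [Finset.sum_div]
  refine (Finset.sum_nbij' (fun j => j - 1) (fun d => d + 1) ?_ ?_ ?_ ?_ ?_).symm
  · intro j hj; rw [Finset.mem_Icc] at hj; rw [Finset.mem_range]; omega
  · intro d hd; rw [Finset.mem_range] at hd; rw [Finset.mem_Icc]; omega
  · intro j hj; rw [Finset.mem_Icc] at hj; omega
  · intro d hd; omega
  · intro j hj
    rw [Finset.mem_Icc] at hj
    obtain ⟨hj1, hj2⟩ := hj
    obtain ⟨d, rfl⟩ : ∃ d : ℕ, j = d + 1 := ⟨j - 1, by omega⟩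
    have hd : d < n := by omega
    rw [Nat.add_sub_cancel]
    -- components
    have e2 : (4 : ℚ) ^ ((n : ℤ) - ((d + 1 : ℕ) : ℤ)) = 2 ^ (2 * (n - 1 - d)) := by
      rw [show ((n : ℤ) - ((d + 1 : ℕ) : ℤ)) = ((n - 1 - d : ℕ) : ℤ) by push_cast; omega,
        zpow_natCast, show (4 : ℚ) = 2 ^ 2 by norm_num, ← pow_mul]
    have e3 : 2 * (n : ℚ) - 2 * ((d + 1 : ℕ) : ℚ) + 1 = 2 * (n : ℚ) - 2 * (d : ℚ) - 1 := by
      push_cast; ring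
    have hd1pos : (0 : ℚ) < 2 * (n : ℚ) - 2 * (d : ℚ) - 1 := by
      have h1 : (d : ℚ) + 1 ≤ (n : ℚ) := by exact_mod_cast hj2
      linarith
    have h2n : (0 : ℚ) < 2 * (n : ℚ) := by positivity
    have hchooseR : ((2 * n - 1).choose (2 * (d + 1) - 1) : ℚ) * (2 * (n : ℚ))
        = ((2 * n).choose (2 * d + 1) : ℚ) * (2 * (n : ℚ) - 2 * (d : ℚ) - 1) := by
      have h := Nat.choose_mul_succ_eq (2 * n - 1) (2 * d + 1)
      have e1 : 2 * n - 1 + 1 = 2 * n := by omega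
      rw [e1] at h
      have := congrArg (fun x : ℕ => (x : ℚ)) h
      push_cast [Nat.cast_sub (by omega : 2 * d + 1 ≤ 2 * n)] at this
      rw [show 2 * (d + 1) - 1 = 2 * d + 1 by omega]
      convert this using 2 <;> push_cast <;> ring
    have hite : (if ((a : ℤ) + 1 - (n : ℤ)) ≤ ((d + 1 : ℕ) : ℤ) then
          (((2 * (d + 1) - 1).choose (((d + 1 : ℕ) : ℤ) - ((a : ℤ) + 1 - (n : ℤ))).toNat) : ℚ)
        else 0)
        = (if a ≤ n + d then ((2 * d + 1).choose (n + d - a) : ℚ) else 0) := by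
      by_cases hc : a ≤ n + d
      · rw [if_pos (by push_cast; omega), if_pos hc,
          show 2 * (d + 1) - 1 = 2 * d + 1 by omega,
          show (((d + 1 : ℕ) : ℤ) - ((a : ℤ) + 1 - (n : ℤ))).toNat = n + d - a by
            push_cast; omega]
      · rw [if_neg (by push_cast; omega), if_neg hc]
    rw [hite, e2, e3, div_mul_eq_mul_div, div_mul_eq_mul_div,
      div_eq_div_iff (by linarith) (by linarith : (0:ℚ) < 4 * (n:ℚ)).ne']
    linear_combination (2 ^ (2 * (n - 1 - d)) *
      (if a ≤ n + d then ((2 * d + 1).choose (n + d - a) : ℚ) else 0) * 2) * hchooseR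

end CombIdentOddAux

open CombIdentOddAux

/-- For all positive integers `m`, `n`:
`∑_{k=1−n}^{n} (−1)^k k^(2m−1)/(2n−2k+1) ⬝ C(4n−1, 2n+2k−1)
  = ∑_{j=1}^{m} ∑_{k=1−j}^{j} 4^(n−j)(−1)^k k^(2m−1)/(2n−2j+1) ⬝ C(2n−1, 2j−1) C(2j−1, j−k)`. -/
theorem combinatorial_identity_odd (m n : ℕ) (hm : 0 < m) (hn : 0 < n) :
    ∑ k ∈ Finset.Icc (1 - (n : ℤ)) (n : ℤ),
      (((k.negOnePow : ℤ) * k ^ (2 * m - 1) : ℤ) : ℚ) / (2 * (n : ℚ) - 2 * (k : ℚ) + 1) *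
        (Nat.choose (4 * n - 1) (2 * (n : ℤ) + 2 * k - 1).toNat : ℚ)
    = ∑ j ∈ Finset.Icc 1 m, ∑ k ∈ Finset.Icc (1 - (j : ℤ)) (j : ℤ),
        (4 : ℚ) ^ ((n : ℤ) - (j : ℤ)) *
          (((k.negOnePow : ℤ) * k ^ (2 * m - 1) : ℤ) : ℚ) / (2 * (n : ℚ) - 2 * (j : ℚ) + 1) *
          (Nat.choose (2 * n - 1) (2 * j - 1) : ℚ) *
          (Nat.choose (2 * j - 1) ((j : ℤ) - k).toNat : ℚ) := by
  classical
  set F : ℤ → ℚ := fun k => (((k.negOnePow : ℤ) * k ^ (2 * m - 1) : ℤ) : ℚ) with hF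
  set T : ℕ → ℤ → ℚ := fun j k =>
    (4 : ℚ) ^ ((n : ℤ) - (j : ℤ)) * F k / (2 * (n : ℚ) - 2 * (j : ℚ) + 1) *
      ((2 * n - 1).choose (2 * j - 1) : ℚ) * ((2 * j - 1).choose ((j : ℤ) - k).toNat : ℚ)
    with hT
  have hGoal : ∑ j ∈ Icc 1 n, ∑ k ∈ Icc (1 - (j : ℤ)) (j : ℤ), T j k
      = ∑ j ∈ Icc 1 m, ∑ k ∈ Icc (1 - (j : ℤ)) (j : ℤ), T j k := by
    have hzero : ∀ j ∈ Icc 1 (max m n), j ∉ Icc 1 n →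
        ∑ k ∈ Icc (1 - (j : ℤ)) (j : ℤ), T j k = 0 := by
      intro j hj hj'
      rw [Finset.mem_Icc] at hj hj'
      refine Finset.sum_eq_zero fun k _ => ?_
      rw [hT]
      dsimp only
      rw [Nat.choose_eq_zero_of_lt (show 2 * n - 1 < 2 * j - 1 by omega), Nat.cast_zero]
      ring
    have hzero2 : ∀ j ∈ Icc 1 (max m n), j ∉ Icc 1 m →
        ∑ k ∈ Icc (1 - (j : ℤ)) (j : ℤ), T j k = 0 := by
      intro j hj hj'
      rw [Finset.mem_Icc] at hj hj'
      have hstep : ∑ k ∈ Icc (1 - (j : ℤ)) (j : ℤ), T j k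
          = ((4 : ℚ) ^ ((n : ℤ) - (j : ℤ)) / (2 * (n : ℚ) - 2 * (j : ℚ) + 1) *
              ((2 * n - 1).choose (2 * j - 1) : ℚ)) *
            ∑ k ∈ Icc (1 - (j : ℤ)) (j : ℤ),
              F k * ((2 * j - 1).choose ((j : ℤ) - k).toNat : ℚ) := by
        rw [Finset.mul_sum]
        refine Finset.sum_congr rfl fun k _ => ?_
        rw [hT]
        dsimp only
        ring
      rw [hstep, hF]
      rw [Dvanish m j hm (by omega), mul_zero]
    rw [Finset.sum_subset (Finset.Icc_subset_Icc_right (le_max_right m n)) hzero,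
      Finset.sum_subset (Finset.Icc_subset_Icc_right (le_max_left m n)) hzero2]
  rw [← hGoal]
  have step1 : ∀ k ∈ Icc (1 - (n : ℤ)) (n : ℤ),
      F k / (2 * (n : ℚ) - 2 * (k : ℚ) + 1) *
          ((4 * n - 1).choose (2 * (n : ℤ) + 2 * k - 1).toNat : ℚ)
      = ∑ j ∈ Icc 1 n, F k *
          ((4 : ℚ) ^ ((n : ℤ) - (j : ℤ)) / (2 * (n : ℚ) - 2 * (j : ℚ) + 1) *
            ((2 * n - 1).choose (2 * j - 1) : ℚ) *
            (if k ≤ (j : ℤ) then ((2 * j - 1).choose ((j : ℤ) - k).toNat : ℚ) else 0)) := by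
    intro k hk
    rw [Finset.mem_Icc] at hk
    rw [show F k / (2 * (n : ℚ) - 2 * (k : ℚ) + 1) *
          ((4 * n - 1).choose (2 * (n : ℤ) + 2 * k - 1).toNat : ℚ)
        = F k * (((4 * n - 1).choose (2 * (n : ℤ) + 2 * k - 1).toNat : ℚ) /
            (2 * (n : ℚ) - 2 * (k : ℚ) + 1)) by ring,
      hkey n hn k hk.1 hk.2, Finset.mul_sum]
  rw [Finset.sum_congr rfl step1, Finset.sum_comm]
  refine Finset.sum_congr rfl fun j hj => ?_
  rw [Finset.mem_Icc] at hj
  have hsub : Icc (1 - (j : ℤ)) (j : ℤ) ⊆ Icc (1 - (n : ℤ)) (n : ℤ) := by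
    apply Finset.Icc_subset_Icc <;> [omega; omega]
  have hvan : ∀ k ∈ Icc (1 - (n : ℤ)) (n : ℤ), k ∉ Icc (1 - (j : ℤ)) (j : ℤ) →
      F k * ((4 : ℚ) ^ ((n : ℤ) - (j : ℤ)) / (2 * (n : ℚ) - 2 * (j : ℚ) + 1) *
        ((2 * n - 1).choose (2 * j - 1) : ℚ) *
        (if k ≤ (j : ℤ) then ((2 * j - 1).choose ((j : ℤ) - k).toNat : ℚ) else 0)) = 0 := by
    intro k hk hk'
    rw [Finset.mem_Icc] at hk
    rw [Finset.mem_Icc] at hk'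
    push_neg at hk'
    by_cases hkj : k ≤ (j : ℤ)
    · rw [if_pos hkj,
        Nat.choose_eq_zero_of_lt (show 2 * j - 1 < ((j : ℤ) - k).toNat by omega),
        Nat.cast_zero]
      ring
    · rw [if_neg hkj]
      ring
  rw [← Finset.sum_subset hsub hvan]
  refine Finset.sum_congr rfl fun k hk => ?_
  rw [Finset.mem_Icc] at hk
  rw [if_pos hk.2, hT]
  dsimp only
  ring
end

section
/- For all positive integers m and n, the following identity of rational numbers holds: Σ_{k=−n}^{n} (−1)^k k^(2m) / (2n−2k+1) · binom(4n+1, 2n+2k+1) = Σ_{j=1}^{m} Σ_{k=−j}^{j} 4^(n−j) (−1)^k k^(2m) / (2n−2j+1) · binom(2n, 2j) · binom(2j, j−k). -/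
/-!
Write `(1 + x)^(4n+2) = ((1 + x²) + 2x)^(2n+1)` and expand by the binomial theorem. Odd powers
of `x` only come from the terms `C(2n+1, 2j) (1 + x²)^(2j) (2x)^(2n+1-2j)`, so pairing the odd
coefficients with the weights `(-1)^k k^(2m)` turns the left side, after the absorption
`C(4n+1, r) / (4n+2-r) = C(4n+2, r) / (4n+2)`, into `∑_{j ≤ n} c_j M_j` with
`M_j = ∑_{|k| ≤ j} (-1)^k k^(2m) C(2j, j+k)`.
Up to sign `M_j` is the `2j`-th forward difference of `x ↦ x^(2m)`, so it vanishes for `j > m`,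
and `M_0 = 0` because `m > 0`. The absorption `C(2n, 2j) / (2n-2j+1) = C(2n+1, 2j) / (2n+1)`
identifies the right side with the same sum.
-/

open Finset Polynomial

theorem sum_range_two_mul_eq_sum_even_add_odd {M : Type*} [AddCommMonoid M] (f : ℕ → M)
    (n : ℕ) :
    ∑ i ∈ range (2 * n), f i = ∑ j ∈ range n, (f (2 * j) + f (2 * j + 1)) := by
  induction n with
  | zero => simp
  | succ n ih => rw [mul_add_one, sum_range_succ, sum_range_succ, sum_range_succ, ih, add_assoc]

theorem sum_Icc_neg_eq_sum_range {M : Type*} [AddCommMonoid M] (j : ℕ) (g : ℤ → M) :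
    ∑ k ∈ Icc (-(j : ℤ)) j, g k = ∑ i ∈ range (2 * j + 1), g (i - j) := by
  symm
  refine sum_nbij' (fun i : ℕ => (i : ℤ) - j) (fun k => (k + j).toNat) ?_ ?_ ?_ ?_ ?_ <;>
    intros <;> simp_all <;> omega

theorem Nat.cast_choose_div_eq {K : Type*} [Field K] [CharZero K] {N k : ℕ} (hk : k ≤ N) :
    (N.choose k : K) / (N + 1 - k) = ((N + 1).choose k : K) / (N + 1) := by
  have hsub : ((N + 1 - k : ℕ) : K) = N + 1 - k := by
    push_cast [Nat.cast_sub (by omega : k ≤ N + 1)]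
    ring
  rw [div_eq_div_iff (by rw [← hsub]; exact Nat.cast_ne_zero.mpr (by omega))
    (Nat.cast_add_one_ne_zero N), ← hsub]
  exact_mod_cast Nat.choose_mul_succ_eq N k

theorem sum_neg_one_pow_mul_choose_mul_pow_eq_zero {R : Type*} [CommRing R] {N p : ℕ}
    (h : p < N) (c : R) :
    ∑ i ∈ range (N + 1), (-1) ^ i * (N.choose i : R) * (i + c) ^ p = 0 := by
  have shift := fwdDiff_iter_eq_sum_shift (1 : R) (fun x => x ^ p) N c
  rw [fwdDiff_iter_pow_eq_zero_of_lt h, Pi.zero_apply, eq_comm] at shift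
  calc _ = (-1) ^ N * ((-1) ^ N *
        ∑ i ∈ range (N + 1), (-1) ^ i * (N.choose i : R) * (i + c) ^ p) := by
        rw [← mul_assoc, ← mul_pow, neg_one_mul, neg_neg, one_pow, one_mul]
    _ = (-1) ^ N * 0 := by
      rw [← shift, mul_sum]
      refine congrArg _ (sum_congr rfl fun i hi => ?_)
      obtain ⟨d, rfl⟩ := Nat.exists_eq_add_of_le (Nat.lt_succ_iff.mp (mem_range.mp hi))
      have hsq : ((-1 : R) ^ i) ^ 2 = 1 := by rw [← pow_mul, pow_mul', neg_one_sq, one_pow]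
      rw [Nat.add_sub_cancel_left, zsmul_eq_mul, nsmul_one, pow_add, add_comm c]
      push_cast
      linear_combination ((-1) ^ d * ((i + d).choose i : R) * (i + c) ^ p) * hsq
    _ = 0 := mul_zero _

namespace Polynomial

variable {R : Type*} [CommSemiring R]

theorem X_pow_mul_one_add_X_sq_pow (a l : ℕ) :
    (X ^ a * (1 + X ^ 2) ^ l : R[X]) = ∑ i ∈ range (l + 1), l.choose i • X ^ (a + 2 * i) := by
  rw [add_comm, add_pow, mul_sum]
  refine sum_congr rfl fun i _ => ?_
  rw [one_pow, mul_one, nsmul_eq_mul, pow_add, pow_mul]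
  ring

theorem one_add_X_pow_four_mul_add_two (n : ℕ) :
    ((1 + X) ^ (4 * n + 2) : R[X]) = ∑ j ∈ range (n + 1),
      ((2 ^ (2 * n + 1 - 2 * j) * (2 * n + 1).choose (2 * j)) •
          (X ^ (2 * (n - j) + 1) * (1 + X ^ 2) ^ (2 * j)) +
        (2 ^ (2 * n - 2 * j) * (2 * n + 1).choose (2 * j + 1)) •
          (X ^ (2 * (n - j)) * (1 + X ^ 2) ^ (2 * j + 1))) := by
  rw [show 4 * n + 2 = 2 * (2 * n + 1) by ring, pow_mul,
    show ((1 + X) ^ 2 : R[X]) = 1 + X ^ 2 + 2 * X by ring, add_pow,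
    show 2 * n + 1 + 1 = 2 * (n + 1) by ring, sum_range_two_mul_eq_sum_even_add_odd]
  refine sum_congr rfl fun j hj => ?_
  have hj : j ≤ n := Nat.lt_succ_iff.mp (mem_range.mp hj)
  rw [show 2 * n + 1 - 2 * j = 2 * (n - j) + 1 by omega,
    show 2 * n + 1 - (2 * j + 1) = 2 * (n - j) by omega,
    show 2 * n - 2 * j = 2 * (n - j) by omega, nsmul_eq_mul, nsmul_eq_mul]
  push_cast
  ring

noncomputable def oddCoeffSum (N : ℕ) (f : ℕ → R) : R[X] →ₗ[R] R :=
  ∑ b ∈ range N, f b • lcoeff R (2 * b + 1)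

variable (N : ℕ) (f : ℕ → R)

theorem oddCoeffSum_apply (P : R[X]) :
    oddCoeffSum N f P = ∑ b ∈ range N, f b * P.coeff (2 * b + 1) := by
  simp [oddCoeffSum]

theorem oddCoeffSum_X_pow_even (e : ℕ) : oddCoeffSum N f (X ^ (2 * e)) = 0 := by
  simp only [oddCoeffSum_apply, coeff_X_pow]
  exact sum_eq_zero fun b _ => by rw [if_neg (by omega), mul_zero]

theorem oddCoeffSum_X_pow_odd {e : ℕ} (he : e < N) :
    oddCoeffSum N f (X ^ (2 * e + 1)) = f e := by
  simp [oddCoeffSum_apply, coeff_X_pow, he]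

theorem oddCoeffSum_X_pow_even_mul_one_add_X_sq_pow (e l : ℕ) :
    oddCoeffSum N f (X ^ (2 * e) * (1 + X ^ 2) ^ l) = 0 := by
  rw [X_pow_mul_one_add_X_sq_pow, map_sum]
  exact sum_eq_zero fun i _ => by rw [map_nsmul, ← mul_add, oddCoeffSum_X_pow_even, smul_zero]

theorem oddCoeffSum_X_pow_odd_mul_one_add_X_sq_pow {e l : ℕ} (h : e + l < N) :
    oddCoeffSum N f (X ^ (2 * e + 1) * (1 + X ^ 2) ^ l) =
      ∑ i ∈ range (l + 1), l.choose i * f (e + i) := by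
  rw [X_pow_mul_one_add_X_sq_pow, map_sum]
  refine sum_congr rfl fun i hi => ?_
  rw [map_nsmul, show 2 * e + 1 + 2 * i = 2 * (e + i) + 1 by ring,
    oddCoeffSum_X_pow_odd _ _ (by simp at hi; omega), nsmul_eq_mul]

theorem oddCoeffSum_one_add_X_pow (M : ℕ) :
    oddCoeffSum N f ((1 + X) ^ M) = ∑ b ∈ range N, f b * M.choose (2 * b + 1) := by
  simp [oddCoeffSum_apply, coeff_one_add_X_pow]

end Polynomial

theorem sum_mul_choose_odd_eq {R : Type*} [CommSemiring R] (n : ℕ) (f : ℕ → R) :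
    ∑ b ∈ range (2 * n + 1), f b * (4 * n + 2).choose (2 * b + 1) =
      ∑ j ∈ range (n + 1), 2 ^ (2 * n + 1 - 2 * j) * (2 * n + 1).choose (2 * j) *
        ∑ i ∈ range (2 * j + 1), (2 * j).choose i * f (n - j + i) := by
  rw [← oddCoeffSum_one_add_X_pow, one_add_X_pow_four_mul_add_two, map_sum]
  refine sum_congr rfl fun j hj => ?_
  have hj : j ≤ n := Nat.lt_succ_iff.mp (mem_range.mp hj)
  rw [map_add, map_nsmul, map_nsmul, oddCoeffSum_X_pow_even_mul_one_add_X_sq_pow,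
    oddCoeffSum_X_pow_odd_mul_one_add_X_sq_pow _ _ (by omega), smul_zero, add_zero, nsmul_eq_mul]
  push_cast
  ring

def centralBinomialMoment (p j : ℕ) : ℤ :=
  ∑ i ∈ range (2 * j + 1),
    ((2 * j).choose i : ℤ) * (((i : ℤ) - j).negOnePow * ((i : ℤ) - j) ^ p)

theorem centralBinomialMoment_zero {p : ℕ} (hp : p ≠ 0) : centralBinomialMoment p 0 = 0 := by
  simp [centralBinomialMoment, hp]

theorem centralBinomialMoment_eq_zero_of_lt {p j : ℕ} (h : p < 2 * j) :
    centralBinomialMoment p j = 0 := by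
  calc centralBinomialMoment p j
      = (-1) ^ j * ∑ i ∈ range (2 * j + 1),
          (-1) ^ i * ((2 * j).choose i : ℤ) * (i + -(j : ℤ)) ^ p := by
        rw [centralBinomialMoment, mul_sum]
        refine sum_congr rfl fun i _ => ?_
        rw [Int.negOnePow_sub, Units.val_mul, Int.coe_negOnePow_natCast,
          Int.coe_negOnePow_natCast]
        ring
    _ = 0 := by rw [sum_neg_one_pow_mul_choose_mul_pow_eq_zero h, mul_zero]

theorem sum_Icc_eq_centralBinomialMoment (p j : ℕ) :
    ∑ k ∈ Icc (-(j : ℤ)) j, (k.negOnePow * k ^ p : ℤ) * (2 * j).choose (j - k).toNat =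
      centralBinomialMoment p j := by
  rw [sum_Icc_neg_eq_sum_range, centralBinomialMoment]
  refine sum_congr rfl fun i hi => ?_
  rw [show ((j : ℤ) - (i - j)).toNat = 2 * j - i by omega,
    Nat.choose_symm (by simp at hi; omega), mul_comm]

def expansionCoeff (n j : ℕ) : ℚ :=
  2 ^ (2 * n + 1 - 2 * j) * (2 * n + 1).choose (2 * j) / (4 * n + 2)

theorem expansionCoeff_eq_zero_of_lt {n j : ℕ} (h : n < j) : expansionCoeff n j = 0 := by
  simp [expansionCoeff, Nat.choose_eq_zero_of_lt (by omega : 2 * n + 1 < 2 * j)]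

theorem zpow_mul_choose_div_eq_expansionCoeff (n j : ℕ) :
    (4 : ℚ) ^ ((n : ℤ) - j) * (2 * n).choose (2 * j) / (2 * n - 2 * j + 1) =
      expansionCoeff n j := by
  rcases le_or_gt j n with hj | hj
  · have absorb := Nat.cast_choose_div_eq (K := ℚ) (N := 2 * n) (k := 2 * j) (by omega)
    push_cast at absorb
    rw [expansionCoeff, mul_div_assoc,
      show (2 : ℚ) * n - 2 * j + 1 = 2 * n + 1 - 2 * j by ring, absorb,
      show (n : ℤ) - j = ((n - j : ℕ) : ℤ) by omega, zpow_natCast,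
      show 2 * n + 1 - 2 * j = 2 * (n - j) + 1 by omega,
      show (4 : ℚ) = 2 ^ 2 by norm_num, ← pow_mul]
    field_simp
    ring
  · rw [expansionCoeff_eq_zero_of_lt hj, Nat.choose_eq_zero_of_lt (by omega : 2 * n < 2 * j)]
    simp

theorem sum_Icc_div_mul_choose_eq (p n : ℕ) :
    ∑ k ∈ Icc (-(n : ℤ)) n,
      (((k.negOnePow : ℤ) * k ^ p : ℤ) : ℚ) / (2 * (n : ℚ) - 2 * (k : ℚ) + 1) *
        (Nat.choose (4 * n + 1) (2 * (n : ℤ) + 2 * k + 1).toNat : ℚ) =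
      ∑ j ∈ range (n + 1), expansionCoeff n j * centralBinomialMoment p j := by
  set f : ℕ → ℚ := fun b => (((b - n : ℤ).negOnePow * (b - n : ℤ) ^ p : ℤ) : ℚ)
    with hf
  have absorb : ∀ b ∈ range (2 * n + 1),
      (((((b : ℤ) - n).negOnePow : ℤ) * ((b : ℤ) - n) ^ p : ℤ) : ℚ) /
          (2 * (n : ℚ) - 2 * ((b - n : ℤ) : ℚ) + 1) *
        (Nat.choose (4 * n + 1) (2 * (n : ℤ) + 2 * (b - n) + 1).toNat : ℚ) =
      f b * (4 * n + 2).choose (2 * b + 1) / (4 * n + 2) := by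
    intro b hb
    have absorb := Nat.cast_choose_div_eq (K := ℚ) (N := 4 * n + 1) (k := 2 * b + 1)
      (by simp at hb; omega)
    push_cast at absorb
    rw [show (2 * (n : ℤ) + 2 * (b - n) + 1).toNat = 2 * b + 1 by omega, div_mul_eq_mul_div,
      mul_div_assoc,
      show 2 * (n : ℚ) - 2 * ((b - n : ℤ) : ℚ) + 1 = 4 * n + 1 + 1 - (2 * b + 1) by
        push_cast; ring,
      absorb, add_assoc (4 * (n : ℚ)), one_add_one_eq_two, mul_div_assoc]
  rw [sum_Icc_neg_eq_sum_range, sum_congr rfl absorb, ← sum_div, sum_mul_choose_odd_eq, sum_div]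
  refine sum_congr rfl fun j hj => ?_
  have hj : j ≤ n := Nat.lt_succ_iff.mp (mem_range.mp hj)
  rw [expansionCoeff, centralBinomialMoment, mul_div_right_comm, Int.cast_sum]
  congr 1
  refine sum_congr rfl fun i _ => ?_
  simp only [hf, show ((n - j + i : ℕ) : ℤ) - n = i - j by omega, Int.cast_mul,
    Int.cast_natCast]

theorem sum_Icc_zpow_mul_div_mul_choose_eq (p n j : ℕ) :
    ∑ k ∈ Icc (-(j : ℤ)) j, (4 : ℚ) ^ ((n : ℤ) - j) *
        (((k.negOnePow : ℤ) * k ^ p : ℤ) : ℚ) / (2 * (n : ℚ) - 2 * (j : ℚ) + 1) *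
        (Nat.choose (2 * n) (2 * j) : ℚ) * (Nat.choose (2 * j) ((j : ℤ) - k).toNat : ℚ) =
      expansionCoeff n j * centralBinomialMoment p j := by
  rw [← zpow_mul_choose_div_eq_expansionCoeff, ← sum_Icc_eq_centralBinomialMoment, Int.cast_sum,
    mul_sum]
  refine sum_congr rfl fun k _ => ?_
  push_cast
  ring

theorem combinatorial_identity_even_general (m n : ℕ) (hm : 0 < m) :
    ∑ k ∈ Finset.Icc (-(n : ℤ)) (n : ℤ),
      (((k.negOnePow : ℤ) * k ^ (2 * m) : ℤ) : ℚ) / (2 * (n : ℚ) - 2 * (k : ℚ) + 1) *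
        (Nat.choose (4 * n + 1) (2 * (n : ℤ) + 2 * k + 1).toNat : ℚ)
    = ∑ j ∈ Finset.Icc 1 m, ∑ k ∈ Finset.Icc (-(j : ℤ)) (j : ℤ),
        (4 : ℚ) ^ ((n : ℤ) - (j : ℤ)) *
          (((k.negOnePow : ℤ) * k ^ (2 * m) : ℤ) : ℚ) / (2 * (n : ℚ) - 2 * (j : ℚ) + 1) *
          (Nat.choose (2 * n) (2 * j) : ℚ) *
          (Nat.choose (2 * j) ((j : ℤ) - k).toNat : ℚ) := by
  simp only [sum_Icc_div_mul_choose_eq, sum_Icc_zpow_mul_div_mul_choose_eq]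
  calc ∑ j ∈ range (n + 1), expansionCoeff n j * centralBinomialMoment (2 * m) j
      = ∑ j ∈ range (n + m + 1), expansionCoeff n j * centralBinomialMoment (2 * m) j :=
        sum_subset (range_subset_range.mpr (by omega)) fun j _ hj => by
          rw [expansionCoeff_eq_zero_of_lt (by simpa using hj), zero_mul]
    _ = ∑ j ∈ Icc 1 m, expansionCoeff n j * centralBinomialMoment (2 * m) j := by
        refine (sum_subset (fun j hj => by simp at hj ⊢; omega) fun j _ hj => ?_).symm
        rcases Nat.eq_zero_or_pos j with rfl | hj0
        · rw [centralBinomialMoment_zero (by omega), Int.cast_zero, mul_zero]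
        · rw [centralBinomialMoment_eq_zero_of_lt (by simp at hj; omega), Int.cast_zero, mul_zero]

/-- For all positive integers `m`, `n`:
`∑_{k=−n}^{n} (−1)^k k^(2m)/(2n−2k+1) ⬝ C(4n+1, 2n+2k+1)
  = ∑_{j=1}^{m} ∑_{k=−j}^{j} 4^(n−j)(−1)^k k^(2m)/(2n−2j+1) ⬝ C(2n, 2j) C(2j, j−k)`. -/
theorem combinatorial_identity_even (m n : ℕ) (hm : 0 < m) (hn : 0 < n) :
    ∑ k ∈ Finset.Icc (-(n : ℤ)) (n : ℤ),
      (((k.negOnePow : ℤ) * k ^ (2 * m) : ℤ) : ℚ) / (2 * (n : ℚ) - 2 * (k : ℚ) + 1) *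
        (Nat.choose (4 * n + 1) (2 * (n : ℤ) + 2 * k + 1).toNat : ℚ)
    = ∑ j ∈ Finset.Icc 1 m, ∑ k ∈ Finset.Icc (-(j : ℤ)) (j : ℤ),
        (4 : ℚ) ^ ((n : ℤ) - (j : ℤ)) *
          (((k.negOnePow : ℤ) * k ^ (2 * m) : ℤ) : ℚ) / (2 * (n : ℚ) - 2 * (j : ℚ) + 1) *
          (Nat.choose (2 * n) (2 * j) : ℚ) *
          (Nat.choose (2 * j) ((j : ℤ) - k).toNat : ℚ) :=
  combinatorial_identity_even_general m n hm
end

section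
/- For all positive integers m and j with j > m, one has Σ_{k=−j}^{j} (−1)^k k^(2m) binom(2j, j−k) = 0. -/
open Finset Polynomial
open scoped fwdDiff

/-- Iterated forward difference, `n` times, of a polynomial of degree `< n` vanishes. -/
lemma fwdDiff_iter_eval_eq_zero :
    ∀ (n : ℕ) (p : Polynomial ℤ), p.degree < (n : ℕ) →
      (Δ_[(1 : ℤ)])^[n] (fun x => p.eval x) = 0 := by
  intro n
  induction n with
  | zero =>
      intro p hp
      have hp0 : p = 0 := Polynomial.degree_eq_bot.mp
        (Nat.WithBot.lt_zero_iff.mp (by exact_mod_cast hp))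
      subst hp0
      funext x; simp
  | succ n IH =>
      intro p hp
      rw [Function.iterate_succ_apply]
      have hΔ : Δ_[(1 : ℤ)] (fun x => p.eval x) =
          fun x => (p.comp (X + C 1) - p).eval x := by
        funext x
        simp [fwdDiff, Polynomial.eval_comp]
      rw [hΔ]
      apply IH
      rcases eq_or_ne p 0 with rfl | hp0
      · simp only [Polynomial.zero_comp, sub_self, Polynomial.degree_zero]
        exact_mod_cast WithBot.bot_lt_coe n
      · have hndX : (X + C (1:ℤ)).natDegree = 1 := Polynomial.natDegree_X_add_C 1
        have hlc : (p.comp (X + C 1)).leadingCoeff = p.leadingCoeff := by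
          rw [Polynomial.leadingCoeff_comp (by rw [hndX]; norm_num),
            Polynomial.leadingCoeff_X_add_C, one_pow, mul_one]
        have hc0 : p.comp (X + C 1) ≠ 0 := by
          rw [← Polynomial.leadingCoeff_ne_zero, hlc, Polynomial.leadingCoeff_ne_zero]
          exact hp0
        have hdeg : (p.comp (X + C 1)).degree = p.degree := by
          rw [Polynomial.degree_eq_natDegree hc0, Polynomial.degree_eq_natDegree hp0,
            Polynomial.natDegree_comp, hndX, mul_one]
        have h1 : (p.comp (X + C 1) - p).degree < p.degree :=
          hdeg ▸ Polynomial.degree_sub_lt hdeg hc0 hlc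
        have h2 : p.degree ≤ (n : ℕ) := by
          rw [Polynomial.degree_eq_natDegree hp0]
          exact_mod_cast Nat.lt_succ_iff.mp
            ((Polynomial.natDegree_lt_iff_degree_lt hp0).mpr hp)
        exact lt_of_lt_of_le h1 h2

/-- For positive integers `m`, `j` with `j > m`:
`∑_{k=−j}^{j} (−1)^k k^(2m) C(2j, j−k) = 0`. -/
theorem alternating_binom_sum_even_vanishes (m j : ℕ) (hm : 0 < m) (h : m < j) :
    ∑ k ∈ Finset.Icc (-(j : ℤ)) (j : ℤ),
      (k.negOnePow : ℤ) * k ^ (2 * m) *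
        (Nat.choose (2 * j) ((j : ℤ) - k).toNat : ℤ) = 0 := by
  set p : Polynomial ℤ := (C (j : ℤ) - X) ^ (2 * m) with hp
  have hdeg : p.degree < ((2 * j : ℕ) : WithBot ℕ) := by
    have h1 : p.degree ≤ (2 * m : ℕ) := by
      calc p.degree ≤ (2 * m) • (C (j : ℤ) - X).degree := Polynomial.degree_pow_le _ _
        _ ≤ (2 * m) • (1 : WithBot ℕ) := by
            exact nsmul_le_nsmul_right (by
              calc (C (j : ℤ) - X).degree ≤ max (C (j:ℤ)).degree X.degree :=
                    Polynomial.degree_sub_le _ _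
                _ ≤ 1 := by simp [Polynomial.degree_C_le.trans]; exact
                    le_trans Polynomial.degree_C_le (by norm_num)) _
        _ = ((2 * m : ℕ) : WithBot ℕ) := by simp [nsmul_eq_mul]
    exact lt_of_le_of_lt h1 (by exact_mod_cast (by omega : 2*m < 2*j))
  have hzero := fwdDiff_iter_eval_eq_zero (2 * j) p hdeg
  have key : ∑ i ∈ Finset.range (2 * j + 1),
      ((-1 : ℤ) ^ (2 * j - i) * (2 * j).choose i) * ((j : ℤ) - i) ^ (2 * m) = 0 := by
    have := fwdDiff_iter_eq_sum_shift (1 : ℤ) (fun x => p.eval x) (2 * j) 0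
    rw [hzero] at this
    have := this.symm
    simpa [hp, smul_eq_mul, mul_comm, mul_assoc, mul_left_comm] using this
  have reindex : ∑ k ∈ Finset.Icc (-(j : ℤ)) (j : ℤ),
      (k.negOnePow : ℤ) * k ^ (2 * m) * (Nat.choose (2 * j) ((j : ℤ) - k).toNat : ℤ)
      = (-1 : ℤ) ^ j * ∑ i ∈ Finset.range (2 * j + 1),
          ((-1 : ℤ) ^ (2 * j - i) * (2 * j).choose i) * ((j : ℤ) - i) ^ (2 * m) := by
    rw [Finset.mul_sum]
    refine Finset.sum_bij' (fun k _ => ((j : ℤ) - k).toNat)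
      (fun i _ => (j : ℤ) - i) ?_ ?_ ?_ ?_ ?_
    · intro k hk
      simp only [Finset.mem_Icc] at hk
      simp only [Finset.mem_range]
      omega
    · intro i hi
      simp only [Finset.mem_range] at hi
      simp only [Finset.mem_Icc]
      omega
    · intro k hk
      simp only [Finset.mem_Icc] at hk
      omega
    · intro i hi
      simp only [Finset.mem_range] at hi
      omega
    · intro k hk
      simp only [Finset.mem_Icc] at hk
      have hcast : ((((j : ℤ) - k).toNat : ℤ)) = (j : ℤ) - k := by omega
      rw [hcast]
      have hi : ((j : ℤ) - k).toNat ≤ 2 * j := by omega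
      have hsign : (-1 : ℤ) ^ j * (-1 : ℤ) ^ (2 * j - ((j : ℤ) - k).toNat)
          = (k.negOnePow : ℤ) := by
        have h1 : (-1 : ℤ) ^ (2 * j - ((j : ℤ) - k).toNat) * (-1 : ℤ) ^ (((j : ℤ) - k).toNat)
            = (-1 : ℤ) ^ (2 * j) := by
          rw [← pow_add, Nat.sub_add_cancel hi]
        have h2 : (-1 : ℤ) ^ (2 * j) = 1 := by
          rw [pow_mul]; norm_num
        have h3 : (-1 : ℤ) ^ (2 * j - ((j : ℤ) - k).toNat)
            = (-1 : ℤ) ^ (((j : ℤ) - k).toNat) := by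
          have h4 : ((-1 : ℤ) ^ (((j : ℤ) - k).toNat)) * ((-1 : ℤ) ^ (((j : ℤ) - k).toNat)) = 1 := by
            rw [← pow_add, ← two_mul, pow_mul]; norm_num
          calc (-1 : ℤ) ^ (2 * j - ((j : ℤ) - k).toNat)
              = (-1 : ℤ) ^ (2 * j - ((j : ℤ) - k).toNat) *
                (((-1 : ℤ) ^ (((j : ℤ) - k).toNat)) * ((-1 : ℤ) ^ (((j : ℤ) - k).toNat))) := by
                rw [h4, mul_one]
            _ = ((-1 : ℤ) ^ (2 * j)) * (-1 : ℤ) ^ (((j : ℤ) - k).toNat) := by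
                rw [← mul_assoc, h1]
            _ = (-1 : ℤ) ^ (((j : ℤ) - k).toNat) := by rw [h2, one_mul]
        rw [h3]
        have h5 : ((k.negOnePow : ℤˣ) : ℤ) = ((-1 : ℤ) ^ j) * (-1 : ℤ) ^ (((j : ℤ) - k).toNat) := by
          have : k = (j : ℤ) - (((j : ℤ) - k).toNat : ℤ) := by omega
          rw [this, Int.negOnePow_sub]
          push_cast [Int.coe_negOnePow_natCast]
          congr 2
          omega
        rw [h5]
      rw [← hsign]
      ring
  rw [reindex, key, mul_zero]
end

section
/- For all positive integers m and n, the following identity of rational numbers holds: Σ_{k=1−n}^{n} (−1)^k k^m / (2n−2k+1) · binom(4n−1, 2n+2k−1) = Σ_{j=1}^{n} Σ_{k=1−j}^{j} 4^(n−j) (−1)^k k^m / (2n−2j+1) · binom(2n−1, 2j−1) · binom(2j−1, j−k). (In the paper the outer sum on the right runs over all j ≥ 1, but binom(2n−1, 2j−1) = 0 for j > n, so the sum truncates at j = n.) -/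
/-!
Both sides are linear in the weights `(-1)^k k^m`, so it suffices to compare the coefficients
of each weight. Absorbing the odd denominators through `C(N-1, r) / (N - r) = C(N, r) / N`,
this becomes
`C(4n, 2n+2k-1) = ∑_{max(k, 1-k) ≤ j ≤ n} 2 ⬝ 4^(n-j) C(2n, 2j-1) C(2j-1, j-k)`,
which reads off the coefficient of `X^(2n+2k-1)` in `(1+X)^(4n) = (1 + X^2 + 2X)^(2n)`:
only the odd powers `(2X)^(2n-2j+1)` contribute.
-/

open Polynomial Finset

theorem coeff_one_add_X_sq_pow {R : Type*} [CommSemiring R] (s d : ℕ) :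
    ((1 + X ^ 2 : R[X]) ^ s).coeff d = if 2 ∣ d then (s.choose (d / 2) : R) else 0 := by
  have h : (1 + X ^ 2 : R[X]) ^ s = expand R 2 ((1 + X) ^ s) := by
    rw [map_pow, map_add, map_one, expand_X]
  rw [h, coeff_expand two_pos]
  split <;> simp [coeff_one_add_X_pow]

/-- Compare coefficients in `(1 + X) ^ (2 * N) = (1 + X ^ 2 + 2 * X) ^ N`. -/
theorem choose_two_mul_add_eq_sum (N d : ℕ) :
    (2 * N).choose (N + d) = ∑ s ∈ range (N + 1),
      N.choose s * 2 ^ (N - s) * if 2 ∣ s + d then s.choose ((s + d) / 2) else 0 := by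
  have hexp : (1 + X : ℕ[X]) ^ (2 * N) = ∑ s ∈ range (N + 1),
      ((N.choose s * 2 ^ (N - s) : ℕ) : ℕ[X]) * ((1 + X ^ 2) ^ s * X ^ (N - s)) := by
    rw [pow_mul, show (1 + X : ℕ[X]) ^ 2 = (1 + X ^ 2) + 2 * X by ring, add_pow]
    refine sum_congr rfl fun s _ => ?_
    push_cast
    ring
  have hcoeff := coeff_one_add_X_pow ℕ (2 * N) (N + d)
  rw [Nat.cast_id] at hcoeff
  rw [← hcoeff, hexp, finsetSum_coeff]
  refine sum_congr rfl fun s hs => ?_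
  have hs : s ≤ N := Nat.lt_succ_iff.mp (mem_range.mp hs)
  rw [coeff_natCast_mul, coeff_mul_X_pow', if_pos (by omega), coeff_one_add_X_sq_pow,
    show N + d - (N - s) = s + d by omega]
  rfl

theorem choose_four_mul_eq_sum (n κ : ℕ) (hκ : 1 ≤ κ) :
    (4 * n).choose (2 * n + 2 * κ - 1) = ∑ j ∈ Icc κ n,
      2 * 4 ^ (n - j) * (2 * n).choose (2 * j - 1) * (2 * j - 1).choose (j + κ - 1) := by
  rw [show 4 * n = 2 * (2 * n) by ring, show 2 * n + 2 * κ - 1 = 2 * n + (2 * κ - 1) by omega,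
    choose_two_mul_add_eq_sum]
  have hsub : (Icc κ n).image (fun j => 2 * j - 1) ⊆ range (2 * n + 1) := by
    intro s hs
    simp only [mem_image, mem_Icc, mem_range] at hs ⊢
    omega
  -- only odd `s = 2 * j - 1` contribute, and `(2 * j - 1).choose (j + κ - 1) = 0` for `j < κ`
  have hzero : ∀ s ∈ range (2 * n + 1), s ∉ (Icc κ n).image (fun j => 2 * j - 1) →
      ((2 * n).choose s * 2 ^ (2 * n - s) *
        if 2 ∣ s + (2 * κ - 1) then s.choose ((s + (2 * κ - 1)) / 2) else 0) = 0 := by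
    intro s hs hns
    simp only [mem_image, mem_Icc, mem_range, not_exists, not_and] at hs hns
    split_ifs with hpar
    · rw [Nat.choose_eq_zero_of_lt (n := s), mul_zero]
      have := hns ((s + 1) / 2)
      omega
    · rw [mul_zero]
  rw [← sum_subset hsub hzero, sum_image fun a ha b hb h => by
    simp only [coe_Icc, Set.mem_Icc] at ha hb; omega]
  refine sum_congr rfl fun j hj => ?_
  have hj := mem_Icc.mp hj
  rw [if_pos (by omega), show (2 * j - 1 + (2 * κ - 1)) / 2 = j + κ - 1 by omega,
    show 2 * n - (2 * j - 1) = 2 * (n - j) + 1 by omega, pow_succ, pow_mul]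
  ring

theorem choose_four_mul_toNat_eq_sum (n : ℕ) (k : ℤ) (hk : 1 - (n : ℤ) ≤ k) :
    (4 * n).choose (2 * (n : ℤ) + 2 * k - 1).toNat = ∑ j ∈ Icc (max k (1 - k)).toNat n,
      2 * 4 ^ (n - j) * (2 * n).choose (2 * j - 1) * (2 * j - 1).choose ((j : ℤ) - k).toNat := by
  rcases le_or_gt 1 k with hpos | hneg
  · rw [show (max k (1 - k)).toNat = k.toNat by omega,
      show (2 * (n : ℤ) + 2 * k - 1).toNat = 2 * n + 2 * k.toNat - 1 by omega,
      choose_four_mul_eq_sum n _ (by omega)]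
    refine sum_congr rfl fun j hj => ?_
    have hj := mem_Icc.mp hj
    rw [Nat.choose_symm_of_eq_add
      (show 2 * j - 1 = j + k.toNat - 1 + ((j : ℤ) - k).toNat by omega)]
  · -- the reflection `k ↦ 1 - k` fixes both sides
    rw [show (max k (1 - k)).toNat = (1 - k).toNat by omega,
      show (2 * (n : ℤ) + 2 * k - 1).toNat = 4 * n - (2 * n + 2 * (1 - k).toNat - 1) by omega,
      Nat.choose_symm (by omega), choose_four_mul_eq_sum n _ (by omega)]
    refine sum_congr rfl fun j hj => ?_
    rw [show ((j : ℤ) - k).toNat = j + (1 - k).toNat - 1 by omega]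

theorem cast_choose_pred_div_sub {K : Type*} [Field K] [CharZero K] {N r : ℕ} (h : r < N) :
    ((N - 1).choose r : K) / ((N : K) - r) = N.choose r / N := by
  obtain ⟨M, rfl⟩ : ∃ M, N = M + 1 := ⟨N - 1, by omega⟩
  have hsub : ((M + 1 : ℕ) : K) - r = ((M + 1 - r : ℕ) : K) := by
    rw [Nat.cast_sub h.le]
  rw [Nat.add_sub_cancel, hsub,
    div_eq_div_iff (Nat.cast_ne_zero.mpr (by omega)) (Nat.cast_ne_zero.mpr (by omega))]
  exact_mod_cast Nat.choose_mul_succ_eq M r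

theorem sum_div_mul_choose_four_mul_sub_one_eq (n : ℕ) (c : ℤ → ℚ) :
    ∑ k ∈ Icc (1 - (n : ℤ)) (n : ℤ),
      c k / (2 * (n : ℚ) - 2 * (k : ℚ) + 1) *
        (Nat.choose (4 * n - 1) (2 * (n : ℤ) + 2 * k - 1).toNat : ℚ)
    = ∑ j ∈ Icc 1 n, ∑ k ∈ Icc (1 - (j : ℤ)) (j : ℤ),
        (4 : ℚ) ^ (n - j) * c k / (2 * (n : ℚ) - 2 * (j : ℚ) + 1) *
          (Nat.choose (2 * n - 1) (2 * j - 1) : ℚ) *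
          (Nat.choose (2 * j - 1) ((j : ℤ) - k).toNat : ℚ) := by
  have hL : ∀ k ∈ Icc (1 - (n : ℤ)) n,
      c k / (2 * (n : ℚ) - 2 * k + 1) *
          ((4 * n - 1).choose (2 * (n : ℤ) + 2 * k - 1).toNat : ℚ)
        = c k * ((4 * n).choose (2 * (n : ℤ) + 2 * k - 1).toNat : ℚ) / (4 * n) := by
    intro k hk
    have hk := mem_Icc.mp hk
    set r := (2 * (n : ℤ) + 2 * k - 1).toNat
    have hrq : (r : ℚ) = 2 * n + 2 * k - 1 := by
      exact_mod_cast Int.toNat_of_nonneg (show 0 ≤ 2 * (n : ℤ) + 2 * k - 1 by omega)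
    calc _ = c k * (((4 * n - 1).choose r : ℚ) / (((4 * n : ℕ) : ℚ) - r)) := by
          rw [hrq]; push_cast; ring
      _ = _ := by
          rw [cast_choose_pred_div_sub (by omega)]; push_cast; ring
  have hR : ∀ j ∈ Icc 1 n, ∀ k ∈ Icc (1 - (j : ℤ)) j,
      (4 : ℚ) ^ (n - j) * c k / (2 * (n : ℚ) - 2 * j + 1) *
          ((2 * n - 1).choose (2 * j - 1) : ℚ) * ((2 * j - 1).choose ((j : ℤ) - k).toNat : ℚ)
        = c k * ((2 * 4 ^ (n - j) * (2 * n).choose (2 * j - 1)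
            * (2 * j - 1).choose ((j : ℤ) - k).toNat : ℕ) : ℚ) / (4 * n) := by
    intro j hj k _
    have hj := mem_Icc.mp hj
    have hsq : ((2 * j - 1 : ℕ) : ℚ) = 2 * j - 1 := by
      rw [Nat.cast_sub (by omega)]; push_cast; ring
    calc _ = (4 : ℚ) ^ (n - j) * c k * ((2 * j - 1).choose ((j : ℤ) - k).toNat : ℚ) *
          (((2 * n - 1).choose (2 * j - 1) : ℚ) / (((2 * n : ℕ) : ℚ) - (2 * j - 1 : ℕ))) := by
          rw [hsq]; push_cast; ring
      _ = _ := by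
          rw [cast_choose_pred_div_sub (by omega)]; push_cast; ring
  rw [sum_congr rfl hL, sum_congr rfl fun j hj => sum_congr rfl (hR j hj),
    sum_comm' (t' := Icc (1 - (n : ℤ)) n) (s' := fun k => Icc (max k (1 - k)).toNat n)
      fun j k => by simp only [mem_Icc]; omega]
  refine sum_congr rfl fun k hk => ?_
  rw [← sum_div, ← mul_sum, ← Nat.cast_sum,
    ← choose_four_mul_toNat_eq_sum n k (mem_Icc.mp hk).1]

theorem combinatorial_identity_general_odd_general (m n : ℕ) :
    ∑ k ∈ Finset.Icc (1 - (n : ℤ)) (n : ℤ),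
      (((k.negOnePow : ℤ) * k ^ m : ℤ) : ℚ) / (2 * (n : ℚ) - 2 * (k : ℚ) + 1) *
        (Nat.choose (4 * n - 1) (2 * (n : ℤ) + 2 * k - 1).toNat : ℚ)
    = ∑ j ∈ Finset.Icc 1 n, ∑ k ∈ Finset.Icc (1 - (j : ℤ)) (j : ℤ),
        (4 : ℚ) ^ (n - j) *
          (((k.negOnePow : ℤ) * k ^ m : ℤ) : ℚ) / (2 * (n : ℚ) - 2 * (j : ℚ) + 1) *
          (Nat.choose (2 * n - 1) (2 * j - 1) : ℚ) *
          (Nat.choose (2 * j - 1) ((j : ℤ) - k).toNat : ℚ) :=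
  sum_div_mul_choose_four_mul_sub_one_eq n fun k => (((k.negOnePow : ℤ) * k ^ m : ℤ) : ℚ)

/-- For all positive integers `m`, `n`:
`∑_{k=1−n}^{n} (−1)^k k^m/(2n−2k+1) ⬝ C(4n−1, 2n+2k−1)
  = ∑_{j=1}^{n} ∑_{k=1−j}^{j} 4^(n−j)(−1)^k k^m/(2n−2j+1) ⬝ C(2n−1, 2j−1) C(2j−1, j−k)`
(the outer sum over `j ≥ 1` truncates at `j = n` since `C(2n−1, 2j−1) = 0` for `j > n`). -/
theorem combinatorial_identity_general_odd (m n : ℕ) (hm : 0 < m) (hn : 0 < n) :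
    ∑ k ∈ Finset.Icc (1 - (n : ℤ)) (n : ℤ),
      (((k.negOnePow : ℤ) * k ^ m : ℤ) : ℚ) / (2 * (n : ℚ) - 2 * (k : ℚ) + 1) *
        (Nat.choose (4 * n - 1) (2 * (n : ℤ) + 2 * k - 1).toNat : ℚ)
    = ∑ j ∈ Finset.Icc 1 n, ∑ k ∈ Finset.Icc (1 - (j : ℤ)) (j : ℤ),
        (4 : ℚ) ^ (n - j) *
          (((k.negOnePow : ℤ) * k ^ m : ℤ) : ℚ) / (2 * (n : ℚ) - 2 * (j : ℚ) + 1) *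
          (Nat.choose (2 * n - 1) (2 * j - 1) : ℚ) *
          (Nat.choose (2 * j - 1) ((j : ℤ) - k).toNat : ℚ) :=
  combinatorial_identity_general_odd_general m n
end

section
/- For all positive integers m and n, the following identity of rational numbers holds: Σ_{k=−n}^{n} (−1)^k k^m / (2n−2k+1) · binom(4n+1, 2n+2k+1) = Σ_{j=1}^{n} Σ_{k=−j}^{j} 4^(n−j) (−1)^k k^m / (2n−2j+1) · binom(2n, 2j) · binom(2j, j−k). (In the paper the outer sum on the right runs over all j ≥ 1, but binom(2n, 2j) = 0 for j > n, so the sum truncates at j = n.) -/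
/-!
Since `(1 + X) ^ 2 = (1 + X ^ 2) + 2 X`, comparing coefficients of `X ^ (N + 2κ)` in
`(1 + X) ^ (2N)` gives `∑_j 2 ^ (N - 2j) C(N, 2j) C(2j, j + κ) = C(2N, N + 2κ)`.
For `N = 2n + 1`, the relation `C(2n, 2j) / (2n - 2j + 1) = C(2n + 1, 2j) / (2n + 1)` turns this
into the identity
`∑_j 4^(n-j)/(2n - 2j + 1) C(2n, 2j) C(2j, j + |k|) = C(4n + 1, 2n + 2k + 1)/(2n - 2k + 1)`
for each `|k| ≤ n`. Multiplying by `(-1) ^ k k ^ m` and swapping the order of summation gives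
the theorem; the `k = 0` term vanishes because `m > 0`.
-/

open Polynomial Finset

theorem Finset.sum_range_succ_eq_sum_range_two_mul {M : Type*} [AddCommMonoid M]
    (f : ℕ → M) (hf : ∀ i, Odd i → f i = 0) (N : ℕ) :
    ∑ i ∈ range (N + 1), f i = ∑ j ∈ range (N / 2 + 1), f (2 * j) := by
  induction N with
  | zero => simp
  | succ N ih =>
    rw [sum_range_succ, ih]
    rcases Nat.even_or_odd (N + 1) with ⟨r, hr⟩ | hodd
    · rw [show (N + 1) / 2 = N / 2 + 1 by omega, sum_range_succ (n := N / 2 + 1)]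
      congr 2
      omega
    · rw [hf _ hodd, add_zero, show (N + 1) / 2 = N / 2 by obtain ⟨r, hr⟩ := hodd; omega]

theorem Nat.sum_two_pow_mul_choose_mul_choose (N κ : ℕ) :
    ∑ j ∈ range (N / 2 + 1), 2 ^ (N - 2 * j) * N.choose (2 * j) * (2 * j).choose (j + κ) =
      (2 * N).choose (N + 2 * κ) := by
  have hsq : (1 + X : ℕ[X]) ^ 2 = expand ℕ 2 (1 + X) + C 2 * X := by
    simp only [map_add, map_one, expand_X, C_ofNat]; ring
  have hcoeff : ∀ i ∈ range (N + 1), ((expand ℕ 2 (1 + X)) ^ i * (C 2 * X) ^ (N - i) *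
      (N.choose i : ℕ[X])).coeff (N + 2 * κ) =
        2 ^ (N - i) * N.choose i * if 2 ∣ i then i.choose (i / 2 + κ) else 0 := by
    intro i hi
    have hiN : i ≤ N := Nat.lt_succ_iff.mp (mem_range.mp hi)
    rw [coeff_mul_natCast, mul_pow, ← C_pow, mul_left_comm, coeff_C_mul,
      coeff_mul_X_pow', if_pos (by omega), show N + 2 * κ - (N - i) = i + 2 * κ by omega,
      ← map_pow, coeff_expand two_pos, coeff_one_add_X_pow]
    simp only [Nat.cast_id]
    by_cases h : 2 ∣ i
    · rw [if_pos (by omega), if_pos h, show (i + 2 * κ) / 2 = i / 2 + κ by omega]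
      ring
    · rw [if_neg (by omega), if_neg h]
      ring
  calc _ = ∑ i ∈ range (N + 1),
          2 ^ (N - i) * N.choose i * if 2 ∣ i then i.choose (i / 2 + κ) else 0 := by
        rw [sum_range_succ_eq_sum_range_two_mul (N := N)]
        · refine sum_congr rfl fun j _ => ?_
          rw [if_pos (dvd_mul_right 2 j), Nat.mul_div_cancel_left j two_pos]
        · intro i hi
          rw [if_neg (Nat.not_even_iff_odd.mpr hi ∘ even_iff_two_dvd.mpr), mul_zero]
    _ = ((expand ℕ 2 (1 + X) + C 2 * X) ^ N).coeff (N + 2 * κ) := by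
        rw [add_pow, finsetSum_coeff]
        exact sum_congr rfl fun i hi => (hcoeff i hi).symm
    _ = _ := by rw [← hsq, ← pow_mul, coeff_one_add_X_pow, Nat.cast_id]

theorem sum_four_pow_div_mul_choose_mul_choose (n κ : ℕ) :
    ∑ j ∈ range (n + 1), (4 : ℚ) ^ (n - j) / (2 * n - 2 * j + 1) *
        ((2 * n).choose (2 * j) : ℚ) * ((2 * j).choose (j + κ) : ℚ) =
      ((4 * n + 2).choose (2 * n + 2 * κ + 1) : ℚ) / (4 * n + 2) := by
  have key : ∑ j ∈ range (n + 1), 2 ^ (2 * n + 1 - 2 * j) * (2 * n + 1).choose (2 * j) *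
      (2 * j).choose (j + κ) = (4 * n + 2).choose (2 * n + 2 * κ + 1) := by
    have h := Nat.sum_two_pow_mul_choose_mul_choose (2 * n + 1) κ
    rwa [show (2 * n + 1) / 2 = n by omega, show 2 * (2 * n + 1) = 4 * n + 2 by ring,
      show 2 * n + 1 + 2 * κ = 2 * n + 2 * κ + 1 by ring] at h
  rw [eq_div_iff (by positivity), sum_mul, ← key, Nat.cast_sum]
  refine sum_congr rfl fun j hj => ?_
  obtain ⟨d, rfl⟩ := Nat.exists_eq_add_of_le (Nat.lt_succ_iff.mp (mem_range.mp hj))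
  have hchoose : ((2 * (j + d)).choose (2 * j) : ℚ) * (2 * (j + d) + 1) =
      ((2 * (j + d) + 1).choose (2 * j) : ℚ) * (2 * d + 1) := by
    have h := Nat.choose_mul_succ_eq (2 * (j + d)) (2 * j)
    rw [show 2 * (j + d) + 1 - 2 * j = 2 * d + 1 by omega] at h
    exact_mod_cast h
  have hden : 2 * ((j + d : ℕ) : ℚ) - 2 * j + 1 = 2 * d + 1 := by push_cast; ring
  rw [hden, show 2 * (j + d) + 1 - 2 * j = 2 * d + 1 by omega, show j + d - j = d by omega,
    pow_succ, pow_mul]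
  push_cast
  field_simp
  linear_combination (2 * ((2 * j).choose (j + κ) : ℚ)) * hchoose

theorem Nat.choose_two_mul_toNat_sub (j : ℕ) (k : ℤ) (hk : k.natAbs ≤ j) :
    (2 * j).choose ((j : ℤ) - k).toNat = (2 * j).choose (j + k.natAbs) := by
  rcases Int.natAbs_eq k with hk' | hk'
  · exact Nat.choose_symm_of_eq_add (by omega)
  · rw [show ((j : ℤ) - k).toNat = j + k.natAbs by omega]

theorem Nat.cast_choose_div_succ_sub {K : Type*} [Field K] [CharZero K] (M a : ℕ) (ha : a ≤ M) :
    (M.choose a : K) / ((M + 1 - a : ℕ) : K) = ((M + 1).choose a : K) / (M + 1) := by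
  rw [div_eq_div_iff (Nat.cast_ne_zero.mpr (by omega)) (Nat.cast_add_one_ne_zero M)]
  exact_mod_cast Nat.choose_mul_succ_eq M a

theorem choose_toNat_div_eq_choose_div (n : ℕ) (k : ℤ) (h1 : -(n : ℤ) ≤ k) (h2 : k ≤ n) :
    ((4 * n + 1).choose (2 * (n : ℤ) + 2 * k + 1).toNat : ℚ) / (2 * n - 2 * k + 1) =
      ((4 * n + 2).choose (2 * n + 2 * k.natAbs + 1) : ℚ) / (4 * n + 2) := by
  obtain ⟨κ, rfl | rfl⟩ := Int.eq_nat_or_neg k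
  · have hden : 2 * n - 2 * ((κ : ℤ) : ℚ) + 1 =
        ((4 * n + 1 + 1 - (2 * n + 2 * κ + 1) : ℕ) : ℚ) := by
      rw [show 4 * n + 1 + 1 - (2 * n + 2 * κ + 1) = 2 * (n - κ) + 1 by omega]
      push_cast [Nat.cast_sub (show κ ≤ n by omega)]
      ring
    rw [show (2 * (n : ℤ) + 2 * κ + 1).toNat = 2 * n + 2 * κ + 1 by omega, hden,
      Nat.cast_choose_div_succ_sub _ _ (by omega), Int.natAbs_natCast]
    push_cast
    ring_nf
  · have hden : 2 * n - 2 * ((-κ : ℤ) : ℚ) + 1 =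
        ((4 * n + 1 + 1 - (2 * n - 2 * κ + 1) : ℕ) : ℚ) := by
      rw [show 4 * n + 1 + 1 - (2 * n - 2 * κ + 1) = 2 * n + 2 * κ + 1 by omega]
      push_cast
      ring
    rw [show (2 * (n : ℤ) + 2 * -κ + 1).toNat = 2 * n - 2 * κ + 1 by omega, hden,
      Nat.cast_choose_div_succ_sub _ _ (by omega), Int.natAbs_neg, Int.natAbs_natCast,
      Nat.choose_symm_of_eq_add
        (show 4 * n + 1 + 1 = 2 * n - 2 * κ + 1 + (2 * n + 2 * κ + 1) by omega)]
    push_cast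
    ring_nf

theorem choose_toNat_div_eq_sum (n : ℕ) (k : ℤ) (h1 : -(n : ℤ) ≤ k) (h2 : k ≤ n) :
    ((4 * n + 1).choose (2 * (n : ℤ) + 2 * k + 1).toNat : ℚ) / (2 * n - 2 * k + 1) =
      ∑ j ∈ Icc k.natAbs n, (4 : ℚ) ^ (n - j) / (2 * n - 2 * j + 1) *
        ((2 * n).choose (2 * j) : ℚ) * ((2 * j).choose ((j : ℤ) - k).toNat : ℚ) := by
  rw [choose_toNat_div_eq_choose_div n k h1 h2, ← sum_four_pow_div_mul_choose_mul_choose]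
  symm
  refine sum_subset_zero_on_sdiff (fun j hj => ?_) (fun j hj => ?_) (fun j hj => ?_)
  · rw [mem_range]
    have := (mem_Icc.mp hj).2
    omega
  · rw [mem_sdiff, mem_range, mem_Icc] at hj
    rw [Nat.choose_eq_zero_of_lt (n := 2 * j) (by omega), Nat.cast_zero, mul_zero]
  · rw [Nat.choose_two_mul_toNat_sub j k (mem_Icc.mp hj).1]

theorem combinatorial_identity_general_even_general (m n : ℕ) (hm : 0 < m) :
    ∑ k ∈ Finset.Icc (-(n : ℤ)) (n : ℤ),
      (((k.negOnePow : ℤ) * k ^ m : ℤ) : ℚ) / (2 * (n : ℚ) - 2 * (k : ℚ) + 1) *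
        (Nat.choose (4 * n + 1) (2 * (n : ℤ) + 2 * k + 1).toNat : ℚ)
    = ∑ j ∈ Finset.Icc 1 n, ∑ k ∈ Finset.Icc (-(j : ℤ)) (j : ℤ),
        (4 : ℚ) ^ (n - j) *
          (((k.negOnePow : ℤ) * k ^ m : ℤ) : ℚ) / (2 * (n : ℚ) - 2 * (j : ℚ) + 1) *
          (Nat.choose (2 * n) (2 * j) : ℚ) *
          (Nat.choose (2 * j) ((j : ℤ) - k).toNat : ℚ) := by
  rw [sum_comm' (t' := Icc (-(n : ℤ)) n) (s' := fun k => Icc (max 1 k.natAbs) n)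
    (fun j k => by simp only [mem_Icc]; omega)]
  refine sum_congr rfl fun k hk => ?_
  obtain ⟨h1, h2⟩ := mem_Icc.mp hk
  rcases eq_or_ne k 0 with rfl | hk0
  · simp [zero_pow hm.ne']
  rw [max_eq_right (by omega), div_mul_eq_mul_div, mul_div_assoc,
    choose_toNat_div_eq_sum n k h1 h2, mul_sum]
  exact sum_congr rfl fun j _ => by ring

/-- For all positive integers `m`, `n`:
`∑_{k=−n}^{n} (−1)^k k^m/(2n−2k+1) ⬝ C(4n+1, 2n+2k+1)
  = ∑_{j=1}^{n} ∑_{k=−j}^{j} 4^(n−j)(−1)^k k^m/(2n−2j+1) ⬝ C(2n, 2j) C(2j, j−k)`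
(the outer sum over `j ≥ 1` truncates at `j = n` since `C(2n, 2j) = 0` for `j > n`). -/
theorem combinatorial_identity_general_even (m n : ℕ) (hm : 0 < m) (hn : 0 < n) :
    ∑ k ∈ Finset.Icc (-(n : ℤ)) (n : ℤ),
      (((k.negOnePow : ℤ) * k ^ m : ℤ) : ℚ) / (2 * (n : ℚ) - 2 * (k : ℚ) + 1) *
        (Nat.choose (4 * n + 1) (2 * (n : ℤ) + 2 * k + 1).toNat : ℚ)
    = ∑ j ∈ Finset.Icc 1 n, ∑ k ∈ Finset.Icc (-(j : ℤ)) (j : ℤ),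
        (4 : ℚ) ^ (n - j) *
          (((k.negOnePow : ℤ) * k ^ m : ℤ) : ℚ) / (2 * (n : ℚ) - 2 * (j : ℚ) + 1) *
          (Nat.choose (2 * n) (2 * j) : ℚ) *
          (Nat.choose (2 * j) ((j : ℤ) - k).toNat : ℚ) :=
  combinatorial_identity_general_even_general m n hm
end

section
/- For all positive integers m and k, Σ_{j=1−k}^{k} (−1)^j · C(j, m) · binom(2k−1, k−j) = (−1)^m · ( C(2k−m−2, k−m) − C(2k−m−2, k−2) ), where on the right C(x, r) is the generalized binomial coefficient with integer top x (possibly negative) and integer bottom r, equal to x(x−1)⋯(x−r+1)/r! for r ≥ 0 and equal to 0 for r < 0. In particular the right-hand side vanishes when k > m (i.e., the first term cancels the second), and when k < m the first term C(2k−m−2, k−m) is 0. -/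
/-!
Substituting `j = 1 - k + i` turns the sum into
`(-1)^(k+1) ∑_{i ≤ 2k-1} (-1)^i binom(2k-1, i) C(1-k+i, m)`, which is `±` the `(2k-1)`-st forward
difference of `x ↦ C(x, m)` at `1 - k`. Pascal's rule says `Δ C(·, j+1) = C(·, j)`, so the sum
equals `(-1)^k C(1-k, m-2k+1)`. The stated right-hand side agrees with this by the symmetry
`C(x, r) = C(x, x-r)` for `x ≥ 0` and upper negation `C(-a, r) = (-1)^r C(a+r-1, r)`.
-/

/-- The generalized binomial coefficient `C(x, m) = x(x−1)⋯(x−m+1)/m!` for an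
integer `x` (possibly negative or less than `m`) and a natural number `m`. -/
def genChoose (x : ℤ) (m : ℕ) : ℚ :=
  (∏ i ∈ Finset.range m, ((x : ℚ) - i)) / Nat.factorial m

/-- The generalized binomial coefficient `C(x, r)` with integer top `x`
(possibly negative) and integer bottom `r`: equal to `x(x−1)⋯(x−r+1)/r!`
for `r ≥ 0`, and equal to `0` for `r < 0`. -/
def genChooseZ (x r : ℤ) : ℚ :=
  if r < 0 then 0
  else (∏ i ∈ Finset.range r.toNat, ((x : ℚ) - i)) / Nat.factorial r.toNat

open Finset fwdDiff

lemma genChoose_eq_ringChoose (x : ℤ) (m : ℕ) : genChoose x m = Ring.choose (x : ℚ) m := by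
  rw [Ring.choose_eq_smul, ← Polynomial.aeval_eq_smeval, ← Polynomial.eval_map_algebraMap,
    descPochhammer_map, descPochhammer_eval_eq_prod_range, genChoose, smul_eq_mul, div_eq_inv_mul]

lemma genChooseZ_natCast (x : ℤ) (n : ℕ) : genChooseZ x n = genChoose x n := by
  simp [genChooseZ, genChoose]

lemma genChooseZ_of_neg (x : ℤ) {r : ℤ} (hr : r < 0) : genChooseZ x r = 0 := if_pos hr

lemma genChooseZ_natCast_natCast (n r : ℕ) : genChooseZ n r = n.choose r := by
  rw [genChooseZ_natCast, genChoose_eq_ringChoose, Int.cast_natCast, Ring.choose_natCast]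

lemma genChooseZ_symm {x : ℤ} (hx : 0 ≤ x) (r : ℤ) :
    genChooseZ x (x - r) = genChooseZ x r := by
  lift x to ℕ using hx
  rcases lt_or_ge r 0 with hr | hr
  · lift x - r to ℕ using (by omega) with s hs
    rw [genChooseZ_of_neg _ hr, genChooseZ_natCast_natCast, Nat.choose_eq_zero_of_lt (by omega),
      Nat.cast_zero]
  lift r to ℕ using hr
  rcases lt_or_ge x r with hxr | hxr
  · rw [genChooseZ_of_neg _ (by omega), genChooseZ_natCast_natCast,
      Nat.choose_eq_zero_of_lt hxr, Nat.cast_zero]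
  · rw [show (x : ℤ) - r = ((x - r : ℕ) : ℤ) by omega, genChooseZ_natCast_natCast,
      genChooseZ_natCast_natCast, Nat.choose_symm hxr]

lemma genChooseZ_neg_left (a r : ℤ) :
    genChooseZ (-a) r = r.negOnePow * genChooseZ (a + r - 1) r := by
  rcases lt_or_ge r 0 with hr | hr
  · simp [genChooseZ_of_neg _ hr]
  lift r to ℕ using hr
  rw [genChooseZ_natCast, genChooseZ_natCast, genChoose_eq_ringChoose, genChoose_eq_ringChoose,
    Int.cast_neg, Ring.choose_neg, Units.smul_def]
  push_cast
  rfl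

lemma genChoose_succ_succ (x : ℤ) (j : ℕ) :
    genChoose (x + 1) (j + 1) = genChoose x j + genChoose x (j + 1) := by
  simp only [genChoose_eq_ringChoose, Int.cast_add, Int.cast_one, Ring.choose_succ_succ]

lemma fwdDiff_genChoose (j : ℕ) :
    Δ_[1] (fun x ↦ genChoose x (j + 1)) = fun x ↦ genChoose x j := by
  ext x
  rw [fwdDiff, genChoose_succ_succ, add_sub_cancel_right]

lemma fwdDiff_iter_genChoose (n j : ℕ) :
    Δ_[1] ^[n] (fun x ↦ genChoose x (n + j)) = fun x ↦ genChoose x j := by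
  induction n generalizing j with
  | zero => simp
  | succ n ih =>
    rw [Function.iterate_succ_apply', show n + 1 + j = n + (j + 1) by ring, ih, fwdDiff_genChoose]

lemma fwdDiff_iter_genChoose_eq_genChooseZ (n m : ℕ) (y : ℤ) :
    Δ_[1] ^[n] (fun x ↦ genChoose x m) y = genChooseZ y (m - n) := by
  rcases le_or_gt n m with hnm | hmn
  · obtain ⟨j, rfl⟩ := Nat.exists_eq_add_of_le hnm
    rw [fwdDiff_iter_genChoose, show ((n + j : ℕ) : ℤ) - n = j by push_cast; ring,
      genChooseZ_natCast]
  · obtain ⟨d, rfl⟩ := Nat.exists_eq_add_of_lt hmn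
    have hconst : Δ_[1] ^[m] (fun x ↦ genChoose x m) = fun _ ↦ 1 := by
      simpa [genChoose] using fwdDiff_iter_genChoose m 0
    rw [genChooseZ_of_neg _ (by omega), show m + d + 1 = d + 1 + m by ring,
      Function.iterate_add_apply, hconst, Function.iterate_succ_apply, fwdDiff_const]
    exact congrFun (Function.iterate_fixed (fwdDiff_const 1 (0 : ℚ)) d) y

lemma sum_neg_one_pow_mul_choose_smul_eq_fwdDiff_iter {M G : Type*} [AddCommMonoid M]
    [AddCommGroup G] (h : M) (f : M → G) (n : ℕ) (y : M) :
    ∑ i ∈ range (n + 1), ((-1 : ℤ) ^ i * n.choose i) • f (y + i • h) =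
      (-1 : ℤ) ^ n • Δ_[h] ^[n] f y := by
  rw [fwdDiff_iter_eq_sum_shift, smul_sum]
  refine sum_congr rfl fun i hi ↦ ?_
  rw [smul_smul, ← mul_assoc, ← pow_add,
    show n + (n - i) = 2 * (n - i) + i by have := mem_range.1 hi; omega, pow_add, pow_mul,
    neg_one_sq, one_pow, one_mul]

lemma sum_neg_one_pow_mul_choose_mul_genChoose (n m : ℕ) (y : ℤ) :
    ∑ i ∈ range (n + 1), (-1 : ℚ) ^ i * n.choose i * genChoose (y + i) m =
      (-1) ^ n * genChooseZ y (m - n) := by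
  have h := sum_neg_one_pow_mul_choose_smul_eq_fwdDiff_iter 1 (fun x ↦ genChoose x m) n y
  rw [← fwdDiff_iter_genChoose_eq_genChooseZ]
  simpa [zsmul_eq_mul] using h

lemma cast_negOnePow_of_even_sub {R : Type*} [Ring R] (n : ℤ) (k : ℕ) (h : Even (n - k)) :
    (n.negOnePow : R) = (-1) ^ k := by
  rw [(Int.negOnePow_eq_iff n k).2 h, Int.cast_negOnePow_natCast]

lemma neg_one_pow_mul_sub_genChooseZ (m k : ℕ) :
    (-1 : ℚ) ^ m * (genChooseZ (2 * (k : ℤ) - m - 2) ((k : ℤ) - m) -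
      genChooseZ (2 * (k : ℤ) - m - 2) ((k : ℤ) - 2)) =
      (-1) ^ k * genChooseZ (1 - k) (m - (2 * k - 1)) := by
  rcases le_or_gt (m + 2) (2 * k) with hx | hx
  · rw [genChooseZ_of_neg (1 - k) (r := m - (2 * k - 1)) (by omega),
      ← genChooseZ_symm (by omega) ((k : ℤ) - m),
      show 2 * (k : ℤ) - m - 2 - (k - m) = k - 2 by ring, sub_self, mul_zero, mul_zero]
  rcases lt_or_ge k m with hkm | hkm
  · rw [genChooseZ_of_neg _ (r := k - m) (by omega),
      show 2 * (k : ℤ) - m - 2 = -(m + 2 - 2 * k) by ring, show 1 - (k : ℤ) = -(k - 1) by ring,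
      genChooseZ_neg_left, genChooseZ_neg_left,
      show (m : ℤ) + 2 - 2 * k + (k - 2) - 1 = m - k - 1 by ring,
      show (k : ℤ) - 1 + (m - (2 * k - 1)) - 1 = m - k - 1 by ring,
      ← genChooseZ_symm (x := m - k - 1) (by omega) (k - 2),
      show (m : ℤ) - k - 1 - (k - 2) = m - (2 * k - 1) by ring,
      cast_negOnePow_of_even_sub _ k (even_iff_two_dvd.2 (by omega)),
      cast_negOnePow_of_even_sub _ (m + 1) (even_iff_two_dvd.2 (by omega))]
    ring
  · obtain ⟨rfl, rfl⟩ | ⟨rfl, rfl⟩ : (k = 0 ∧ m = 0) ∨ (k = 1 ∧ m = 1) := by omega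
    · simp [genChooseZ]
    · simp [genChooseZ]

lemma sum_Icc_one_sub_eq_sum_range {M : Type*} [AddCommMonoid M] (k : ℕ) (f : ℤ → M) :
    ∑ j ∈ Icc (1 - (k : ℤ)) k, f j = ∑ i ∈ range (2 * k), f (1 - k + i) := by
  refine sum_nbij' (fun j ↦ (j - (1 - k)).toNat) (fun i ↦ 1 - k + i) ?_ ?_ ?_ ?_ ?_ <;>
    intro j hj <;> simp only [mem_Icc, mem_range] at hj ⊢ <;> first | omega | congr 1; omega

theorem inner_sum_eval_general (m k : ℕ) (hk : 0 < k) :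
    ∑ j ∈ Finset.Icc (1 - (k : ℤ)) (k : ℤ),
      ((j.negOnePow : ℤ) : ℚ) * genChoose j m *
        (Nat.choose (2 * k - 1) ((k : ℤ) - j).toNat : ℚ)
    = (-1 : ℚ) ^ m *
        (genChooseZ (2 * (k : ℤ) - m - 2) ((k : ℤ) - m) -
         genChooseZ (2 * (k : ℤ) - m - 2) ((k : ℤ) - 2)) := by
  obtain ⟨n, hn⟩ : ∃ n, 2 * k = n + 1 := ⟨2 * k - 1, by omega⟩
  have hterm : ∀ i ∈ range (n + 1),
      (((1 - k + i : ℤ).negOnePow : ℤ) : ℚ) * genChoose (1 - k + i) m *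
        (n.choose ((k : ℤ) - (1 - k + i)).toNat : ℚ) =
      (-1) ^ (k + 1) * ((-1) ^ i * n.choose i * genChoose (1 - k + i) m) := by
    intro i hi
    rw [show ((k : ℤ) - (1 - k + i)).toNat = n - i by omega,
      Nat.choose_symm (Nat.lt_succ_iff.1 (mem_range.1 hi)),
      cast_negOnePow_of_even_sub _ (k + 1 + i) (even_iff_two_dvd.2 (by omega))]
    ring
  rw [sum_Icc_one_sub_eq_sum_range, neg_one_pow_mul_sub_genChooseZ, show 2 * k - 1 = n by omega,
    hn, sum_congr rfl hterm, ← mul_sum, sum_neg_one_pow_mul_choose_mul_genChoose,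
    (Odd.neg_one_pow ⟨k - 1, by omega⟩ : (-1 : ℚ) ^ n = -1), show 2 * (k : ℤ) - 1 = n by omega,
    pow_succ]
  ring

/-- For all positive integers `m`, `k`:
`∑_{j=1−k}^{k} (−1)^j ⬝ C(j, m) ⬝ binom(2k−1, k−j)
  = (−1)^m ⬝ (C(2k−m−2, k−m) − C(2k−m−2, k−2))`. -/
theorem inner_sum_eval (m k : ℕ) (hm : 0 < m) (hk : 0 < k) :
    ∑ j ∈ Finset.Icc (1 - (k : ℤ)) (k : ℤ),
      ((j.negOnePow : ℤ) : ℚ) * genChoose j m *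
        (Nat.choose (2 * k - 1) ((k : ℤ) - j).toNat : ℚ)
    = (-1 : ℚ) ^ m *
        (genChooseZ (2 * (k : ℤ) - m - 2) ((k : ℤ) - m) -
         genChooseZ (2 * (k : ℤ) - m - 2) ((k : ℤ) - 2)) :=
  inner_sum_eval_general m k hk
end
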